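/- arXiv:2411.14661 — 7 statements merged into one kernel-verified Lean document; each statement's English description precedes it below -/
import Mathlib

section
/- Let F be a definably complete expansion of an ordered field. A definable subset X of F^n is bounded and closed if and only if it is definably compact, i.e., for every definable filtered collection 𝒞 of nonempty closed subsets of X, the intersection of all members of 𝒞 is nonempty. -/
open FirstOrder Set Topology

set_option linter.unusedSectionVars false
set_option linter.unusedVariables false

section Toolkit
variable {L : FirstOrder.Language} {F : Type*} [Field F] [LinearOrder F] [IsStrictOrderedRing F] [L.Structure F]

lemma dconst {α : Type} (i : α) (c : F) :
    (Set.univ : Set F).Definable L {x : α → F | x i = c} := by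
  refine ⟨Language.Term.equal (Language.Term.var i)
    (Language.Constants.term (Language.con L ⟨c, trivial⟩)), ?_⟩
  ext x
  simp [Language.Formula.realize_equal, Language.Term.realize_con]

lemma dlt (hlt : (Set.univ : Set F).Definable L {x : Fin 2 → F | x 0 < x 1})
    {α : Type} (a b : α) :
    (Set.univ : Set F).Definable L {x : α → F | x a < x b} := by
  have h := hlt.preimage_comp (M := F) (![a, b] : Fin 2 → α)
  convert h using 1
  ext x
  simp

lemma dle (hlt : (Set.univ : Set F).Definable L {x : Fin 2 → F | x 0 < x 1})
    {α : Type} (a b : α) :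
    (Set.univ : Set F).Definable L {x : α → F | x a ≤ x b} := by
  have h := (dlt hlt b a).compl
  convert h using 1
  ext x
  simp [not_lt]

lemma dadd (hadd : (Set.univ : Set F).Definable L {x : Fin 3 → F | x 0 + x 1 = x 2})
    {α : Type} (a b c : α) :
    (Set.univ : Set F).Definable L {x : α → F | x a + x b = x c} := by
  have h := hadd.preimage_comp (M := F) (![a, b, c] : Fin 3 → α)
  convert h using 1
  ext x
  simp

lemma dproj {α β : Type} [Finite α] [Finite β] {s : Set (α ⊕ β → F)}
    (h : (Set.univ : Set F).Definable L s) :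
    (Set.univ : Set F).Definable L {x : α → F | ∃ y : β → F, Sum.elim x y ∈ s} := by
  have him := h.image_comp (M := F) (Sum.inl : α → α ⊕ β)
  convert him using 1
  ext x
  constructor
  · rintro ⟨y, hy⟩
    exact ⟨Sum.elim x y, hy, rfl⟩
  · rintro ⟨p, hp, rfl⟩
    refine ⟨p ∘ Sum.inr, ?_⟩
    convert hp using 1
    ext (i | j) <;> rfl

lemma dall {α β : Type} [Finite α] [Finite β] {s : Set (α ⊕ β → F)}
    (h : (Set.univ : Set F).Definable L s) :
    (Set.univ : Set F).Definable L {x : α → F | ∀ y : β → F, Sum.elim x y ∈ s} := by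
  have h2 := (dproj h.compl).compl
  convert h2 using 1
  ext x
  simp

end Toolkit

section Toolkit2
variable {L : FirstOrder.Language} {F : Type*} [Field F] [LinearOrder F] [IsStrictOrderedRing F] [L.Structure F]

lemma dposC (hlt : (Set.univ : Set F).Definable L {x : Fin 2 → F | x 0 < x 1})
    {α : Type} [Finite α] (a : α) :
    (Set.univ : Set F).Definable L {x : α → F | 0 < x a} := by
  have h := dproj (β := Fin 1)
    ((dconst (L := L) (Sum.inr 0) (0 : F)).inter (dlt hlt (Sum.inr 0) (Sum.inl a)))
  convert h using 1
  ext x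
  constructor
  · intro hx
    exact ⟨![0], by simp, by simpa using hx⟩
  · rintro ⟨y, h1, h2⟩
    simp only [mem_setOf_eq, Sum.elim_inr, Sum.elim_inl] at h1 h2
    simp only [mem_setOf_eq]
    rwa [h1] at h2

lemma dleAddC (hadd : (Set.univ : Set F).Definable L {x : Fin 3 → F | x 0 + x 1 = x 2})
    (hlt : (Set.univ : Set F).Definable L {x : Fin 2 → F | x 0 < x 1})
    {α : Type} [Finite α] (a e : α) (c : F) :
    (Set.univ : Set F).Definable L {x : α → F | x a ≤ c + x e} := by
  have h := dproj (β := Fin 2)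
    (((dconst (L := L) (Sum.inr 0) c).inter
      (dadd hadd (Sum.inr 0) (Sum.inl e) (Sum.inr 1))).inter
      (dle hlt (Sum.inl a) (Sum.inr 1)))
  convert h using 1
  ext x
  constructor
  · intro hx
    exact ⟨![c, c + x e], by simp, by simpa using hx⟩
  · rintro ⟨y, ⟨h1, h2⟩, h3⟩
    simp only [mem_setOf_eq, Sum.elim_inr, Sum.elim_inl] at h1 h2 h3
    simp only [mem_setOf_eq]
    rw [h1] at h2; rw [← h2] at h3; exact h3

lemma dgeAddC (hadd : (Set.univ : Set F).Definable L {x : Fin 3 → F | x 0 + x 1 = x 2})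
    (hlt : (Set.univ : Set F).Definable L {x : Fin 2 → F | x 0 < x 1})
    {α : Type} [Finite α] (a e : α) (c : F) :
    (Set.univ : Set F).Definable L {x : α → F | c ≤ x a + x e} := by
  have h := dproj (β := Fin 2)
    (((dconst (L := L) (Sum.inr 0) c).inter
      (dadd hadd (Sum.inl a) (Sum.inl e) (Sum.inr 1))).inter
      (dle hlt (Sum.inr 0) (Sum.inr 1)))
  convert h using 1
  ext x
  constructor
  · intro hx
    exact ⟨![c, x a + x e], by simp, by simpa using hx⟩
  · rintro ⟨y, ⟨h1, h2⟩, h3⟩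
    simp only [mem_setOf_eq, Sum.elim_inr, Sum.elim_inl] at h1 h2 h3
    simp only [mem_setOf_eq]
    rw [h2]; rw [h1] at h3; exact h3

lemma daddLE0 (hadd : (Set.univ : Set F).Definable L {x : Fin 3 → F | x 0 + x 1 = x 2})
    (hlt : (Set.univ : Set F).Definable L {x : Fin 2 → F | x 0 < x 1})
    {α : Type} [Finite α] (a b : α) :
    (Set.univ : Set F).Definable L {x : α → F | x a + x b ≤ 0} := by
  have h := dproj (β := Fin 2)
    (((dadd hadd (Sum.inl a) (Sum.inl b) (Sum.inr 0)).inter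
      (dconst (L := L) (Sum.inr 1) (0 : F))).inter
      (dle hlt (Sum.inr 0) (Sum.inr 1)))
  convert h using 1
  ext x
  constructor
  · intro hx
    exact ⟨![x a + x b, 0], by simp, by simpa using hx⟩
  · rintro ⟨y, ⟨h1, h2⟩, h3⟩
    simp only [mem_setOf_eq, Sum.elim_inr, Sum.elim_inl] at h1 h2 h3
    simp only [mem_setOf_eq]
    rw [h1, ← h2]; exact h3

end Toolkit2

section Closure
variable {F : Type*} [Field F] [LinearOrder F] [IsStrictOrderedRing F] [TopologicalSpace F] [OrderTopology F]

lemma mem_closure_of_boxes {n : ℕ} {c : Fin n → F} {s : Set (Fin n → F)}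
    (h : ∀ ε : F, 0 < ε → ∃ x ∈ s, ∀ i, |x i - c i| ≤ ε) : c ∈ closure s := by
  rw [mem_closure_iff]
  intro o ho hco
  obtain ⟨u, hu, hsub⟩ := isOpen_pi_iff'.1 ho c hco
  have hex : ∀ i, ∃ ε : F, 0 < ε ∧ {b | |b - c i| < ε} ⊆ u i := by
    intro i
    have := (nhds_basis_abs_sub_lt (c i)).mem_iff.1 ((hu i).1.mem_nhds (hu i).2)
    obtain ⟨ε, hε, hs⟩ := this
    exact ⟨ε, hε, hs⟩
  choose ε hε hsubu using hex
  by_cases hn : Nonempty (Fin n)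
  · set δ := Finset.univ.inf' (Finset.univ_nonempty (α := Fin n)) ε with hδ
    have hδpos : 0 < δ := by
      rw [hδ, Finset.lt_inf'_iff]
      exact fun i _ => hε i
    obtain ⟨x, hxs, hx⟩ := h (δ / 2) (by positivity)
    refine ⟨x, hsub ?_, hxs⟩
    intro i _
    apply hsubu i
    have : |x i - c i| ≤ δ / 2 := hx i
    have h2 : δ / 2 < δ := by linarith
    exact lt_of_le_of_lt this (lt_of_lt_of_le h2 (Finset.inf'_le _ (Finset.mem_univ i)))
  · obtain ⟨x, hxs, -⟩ := h 1 one_pos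
    refine ⟨x, hsub ?_, hxs⟩
    intro i _
    exact absurd ⟨i⟩ hn

end Closure

section Forward
variable {L : FirstOrder.Language} {F : Type*} [Field F] [LinearOrder F] [IsStrictOrderedRing F] [L.Structure F]
  [TopologicalSpace F] [OrderTopology F]

lemma forward_dir
    (hadd : (Set.univ : Set F).Definable L {x : Fin 3 → F | x 0 + x 1 = x 2})
    (hlt : (Set.univ : Set F).Definable L {x : Fin 2 → F | x 0 < x 1})
    (hdc : ∀ s : Set F, (Set.univ : Set F).Definable₁ L s → s.Nonempty → BddAbove s →
      ∃ a : F, IsLUB s a)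
    (n : ℕ) (X : Set (Fin n → F))
    (r : F) (hr : ∀ x ∈ X, ∀ i, |x i| ≤ r) (hXcl : IsClosed X)
    (m : ℕ) (T : Set (Fin m → F)) (S : (Fin m → F) → Set (Fin n → F))
    (hTne : T.Nonempty)
    (hFam : (Set.univ : Set F).Definable L
      {p : Fin m ⊕ Fin n → F | p ∘ Sum.inl ∈ T ∧ p ∘ Sum.inr ∈ S (p ∘ Sum.inl)})
    (hmem : ∀ t ∈ T, (S t).Nonempty ∧ S t ⊆ X ∧ closure (S t) ∩ X ⊆ S t)
    (hfil : ∀ t₁ ∈ T, ∀ t₂ ∈ T, ∃ t₃ ∈ T, S t₃ ⊆ S t₁ ∩ S t₂) :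
    (⋂ t ∈ T, S t).Nonempty := by
  classical
  set FamSet : Set (Fin m ⊕ Fin n → F) :=
    {p | p ∘ Sum.inl ∈ T ∧ p ∘ Sum.inr ∈ S (p ∘ Sum.inl)} with hFamSet
  -- each S t is closed
  have hScl : ∀ t ∈ T, IsClosed (S t) := by
    intro t ht
    refine isClosed_of_closure_subset fun y hy => ?_
    have hyX : y ∈ X := by
      have := closure_mono (hmem t ht).2.1 hy
      rwa [hXcl.closure_eq] at this
    exact (hmem t ht).2.2 ⟨hy, hyX⟩
  have key : ∀ k : ℕ, ∃ c : Fin n → F, ∀ t ∈ T, ∀ ε : F, 0 < ε →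
      ∃ x ∈ S t, ∀ j : Fin n, (j : ℕ) < k → |x j - c j| ≤ ε := by
    intro k
    induction k with
    | zero =>
      refine ⟨fun _ => 0, fun t ht ε hε => ?_⟩
      obtain ⟨x, hx⟩ := (hmem t ht).1
      exact ⟨x, hx, fun j hj => absurd hj (by omega)⟩
    | succ k ih =>
      obtain ⟨c, hc⟩ := ih
      by_cases hkn : k < n
      · set κ : Fin n := ⟨k, hkn⟩ with hκ
        set Lset : Set F := {s | ∃ t ∈ T, ∃ ε : F, 0 < ε ∧
          ∀ x ∈ S t, (∀ j : Fin n, (j : ℕ) < k → |x j - c j| ≤ ε) → s ≤ x κ} with hLset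
        have hLne : Lset.Nonempty := by
          obtain ⟨t0, ht0⟩ := hTne
          exact ⟨-r, t0, ht0, 1, one_pos, fun x hx _ =>
            (abs_le.1 (hr x ((hmem t0 ht0).2.1 hx) κ)).1⟩
        have hLbdd : BddAbove Lset := by
          refine ⟨r, fun s hs => ?_⟩
          obtain ⟨t, ht, ε, hε, hall⟩ := hs
          obtain ⟨x, hx1, hx2⟩ := hc t ht ε hε
          exact le_trans (hall x hx1 hx2) ((abs_le.1 (hr x ((hmem t ht).2.1 hx1) κ)).2)
        have hLdef : (Set.univ : Set F).Definable₁ L Lset := by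
          set f : Fin m ⊕ Fin n → (Fin 1 ⊕ (Fin m ⊕ Fin 1)) ⊕ Fin n :=
            Sum.elim (fun j => Sum.inl (Sum.inr (Sum.inl j))) Sum.inr with hf
          set eI : (Fin 1 ⊕ (Fin m ⊕ Fin 1)) ⊕ Fin n := Sum.inl (Sum.inr (Sum.inr 0)) with heI
          set sI : (Fin 1 ⊕ (Fin m ⊕ Fin 1)) ⊕ Fin n := Sum.inl (Sum.inl 0) with hsI
          set BigB : Set (((Fin 1 ⊕ (Fin m ⊕ Fin 1)) ⊕ Fin n) → F) :=
            ⋂ j ∈ Finset.filter (fun j : Fin n => (j : ℕ) < k) Finset.univ,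
              ({p | p (Sum.inr j) ≤ c j + p eI} ∩ {p | c j ≤ p (Sum.inr j) + p eI}) with hBigB
          have hA1 : (Set.univ : Set F).Definable L ((fun g => g ∘ f) ⁻¹' FamSet) :=
            hFam.preimage_comp f
          have hBig : (Set.univ : Set F).Definable L BigB :=
            definable_biInter_finset (fun j =>
              (dleAddC hadd hlt (Sum.inr j) eI (c j)).inter
                (dgeAddC hadd hlt (Sum.inr j) eI (c j))) _
          have hImpl : (Set.univ : Set F).Definable L
              ((((fun g => g ∘ f) ⁻¹' FamSet) ∩ BigB)ᶜ ∪ {p | p sI ≤ p (Sum.inr κ)}) :=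
            ((hA1.inter hBig).compl).union (dle hlt sI (Sum.inr κ))
          have hC := dall (α := Fin 1 ⊕ (Fin m ⊕ Fin 1)) (β := Fin n) hImpl
          have hTproj : (Set.univ : Set F).Definable L
              {t : Fin m → F | ∃ y : Fin n → F, Sum.elim t y ∈ FamSet} := dproj hFam
          have hTpart := hTproj.preimage_comp
            (fun j => (Sum.inr (Sum.inl j) : Fin 1 ⊕ (Fin m ⊕ Fin 1)))
          have hPos := dposC (F := F) hlt (α := Fin 1 ⊕ (Fin m ⊕ Fin 1)) (Sum.inr (Sum.inr 0))
          have hFull := (hTpart.inter hPos).inter hC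
          have hFin1 := dproj (α := Fin 1) (β := Fin m ⊕ Fin 1) hFull
          have hTT : ∀ t : Fin m → F, (∃ y : Fin n → F, Sum.elim t y ∈ FamSet) ↔ t ∈ T := by
            intro t
            constructor
            · rintro ⟨y, h1, -⟩
              rwa [Sum.elim_comp_inl] at h1
            · intro ht
              obtain ⟨x0, hx0⟩ := (hmem t ht).1
              refine ⟨x0, ?_, ?_⟩
              · rwa [Sum.elim_comp_inl]
              · rw [Sum.elim_comp_inl, Sum.elim_comp_inr]
                exact hx0
          show (Set.univ : Set F).Definable L {v : Fin 1 → F | v 0 ∈ Lset}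
          convert hFin1 using 1
          ext v
          simp only [mem_setOf_eq, mem_inter_iff, mem_preimage]
          constructor
          · rintro ⟨t, ht, ε, hε, hall⟩
            refine ⟨Sum.elim t (fun _ => ε), ⟨?_, ?_⟩, ?_⟩
            · show (Sum.elim v (Sum.elim t fun _ => ε) ∘ fun j => Sum.inr (Sum.inl j)) ∈
                {t : Fin m → F | ∃ y : Fin n → F, Sum.elim t y ∈ FamSet}
              have hq : (Sum.elim v (Sum.elim t fun _ => ε) ∘
                  fun j => (Sum.inr (Sum.inl j) : Fin 1 ⊕ (Fin m ⊕ Fin 1))) = t := by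
                funext j; rfl
              rw [hq]
              exact (hTT t).2 ht
            · exact hε
            · intro ys
              by_cases hPB : Sum.elim (Sum.elim v (Sum.elim t fun _ => ε)) ys ∈
                  (((fun g => g ∘ f) ⁻¹' FamSet) ∩ BigB)
              · right
                have hcomp : Sum.elim (Sum.elim v (Sum.elim t fun _ => ε)) ys ∘ f =
                    Sum.elim t ys := by
                  funext z; cases z <;> rfl
                have hS : ys ∈ S t := by
                  have h1 := hPB.1
                  rw [mem_preimage, hcomp] at h1
                  have h2 := h1.2
                  rw [Sum.elim_comp_inl, Sum.elim_comp_inr] at h2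
                  exact h2
                have hbox : ∀ j : Fin n, (j : ℕ) < k → |ys j - c j| ≤ ε := by
                  intro j hj
                  have h2 := hPB.2
                  rw [hBigB, mem_iInter₂] at h2
                  have h3 := h2 j (by simp [hj])
                  obtain ⟨h4, h5⟩ := h3
                  simp only [heI, mem_setOf_eq, Sum.elim_inl, Sum.elim_inr] at h4 h5
                  rw [abs_le]
                  constructor
                  · linarith
                  · linarith
                exact hall ys hS hbox
              · left
                exact hPB
          · rintro ⟨y, ⟨hTp, hPos'⟩, hAll⟩
            refine ⟨fun j => y (Sum.inl j), (hTT _).1 hTp, y (Sum.inr 0), hPos', ?_⟩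
            intro x hx hbx
            rcases hAll x with hneg | hle
            · exfalso
              apply hneg
              constructor
              · rw [mem_preimage]
                have hcomp : Sum.elim (Sum.elim v y) x ∘ f =
                    Sum.elim (fun j => y (Sum.inl j)) x := by
                  funext z; cases z <;> rfl
                rw [hcomp]
                refine ⟨?_, ?_⟩
                · rw [Sum.elim_comp_inl]
                  exact (hTT _).1 hTp
                · rw [Sum.elim_comp_inl, Sum.elim_comp_inr]
                  exact hx
              · rw [hBigB, mem_iInter₂]
                intro j hj
                simp only [Finset.mem_filter, Finset.mem_univ, true_and] at hj
                have hb2 := abs_le.1 (hbx j hj)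
                constructor
                · simp only [heI, mem_setOf_eq, Sum.elim_inl, Sum.elim_inr]
                  linarith [hb2.2]
                · simp only [heI, mem_setOf_eq, Sum.elim_inl, Sum.elim_inr]
                  linarith [hb2.1]
            · exact hle
        obtain ⟨cκ, hcκ⟩ := hdc Lset hLdef hLne hLbdd
        refine ⟨Function.update c κ cκ, ?_⟩
        intro t ht ε hε
        have h1 : ∃ s ∈ Lset, cκ - ε < s := by
          by_contra hcon
          push_neg at hcon
          have : cκ ≤ cκ - ε := hcκ.2 hcon
          linarith
        obtain ⟨s, ⟨t', ht', ε', hε', hall'⟩, hsgt⟩ := h1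
        obtain ⟨t3, ht3, hsub3⟩ := hfil t ht t' ht'
        have hε3 : 0 < min ε ε' := lt_min hε hε'
        have h2 : ∃ x ∈ S t3, (∀ j : Fin n, (j : ℕ) < k → |x j - c j| ≤ min ε ε') ∧
            x κ < cκ + ε := by
          by_contra hcon
          push_neg at hcon
          have hmemL : cκ + ε ∈ Lset :=
            ⟨t3, ht3, min ε ε', hε3, fun x hx hbx => hcon x hx hbx⟩
          have := hcκ.1 hmemL
          linarith
        obtain ⟨x, hx3, hbx, hxlt⟩ := h2
        have hxl : s ≤ x κ := hall' x (hsub3 hx3).2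
          (fun j hj => le_trans (hbx j hj) (min_le_right ε ε'))
        refine ⟨x, (hsub3 hx3).1, ?_⟩
        intro j hj
        rcases eq_or_ne j κ with rfl | hne
        · rw [Function.update_self]
          refine abs_le.2 ⟨by linarith, by linarith⟩
        · rw [Function.update_of_ne hne]
          have hjk : (j : ℕ) < k := by
            rcases lt_or_eq_of_le (Nat.lt_succ_iff.1 hj) with h | h
            · exact h
            · exact absurd (Fin.ext h : j = κ) hne
          exact le_trans (hbx j hjk) (min_le_left _ _)
      · refine ⟨c, fun t ht ε hε => ?_⟩
        obtain ⟨x, hx1, hx2⟩ := hc t ht ε hε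
        exact ⟨x, hx1, fun j hj => hx2 j (by have := j.isLt; omega)⟩
  obtain ⟨c, hc⟩ := key n
  refine ⟨c, mem_iInter₂.2 fun t ht => ?_⟩
  have hcl : c ∈ closure (S t) := mem_closure_of_boxes (fun ε hε => by
    obtain ⟨x, h1, h2⟩ := hc t ht ε hε
    exact ⟨x, h1, fun i => h2 i i.isLt⟩)
  rwa [(hScl t ht).closure_eq] at hcl

end Forward

section Reverse
variable {L : FirstOrder.Language} {F : Type*} [Field F] [LinearOrder F] [IsStrictOrderedRing F] [L.Structure F]
  [TopologicalSpace F] [OrderTopology F]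

lemma rev_bounded
    (hadd : (Set.univ : Set F).Definable L {x : Fin 3 → F | x 0 + x 1 = x 2})
    (hlt : (Set.univ : Set F).Definable L {x : Fin 2 → F | x 0 < x 1})
    (n : ℕ) (X : Set (Fin n → F))
    (hX : (Set.univ : Set F).Definable L X)
    (H : ∀ (m : ℕ) (T : Set (Fin m → F)) (S : (Fin m → F) → Set (Fin n → F)),
        T.Nonempty →
        (Set.univ : Set F).Definable L
          {p : Fin m ⊕ Fin n → F | p ∘ Sum.inl ∈ T ∧ p ∘ Sum.inr ∈ S (p ∘ Sum.inl)} →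
        (∀ t ∈ T, (S t).Nonempty ∧ S t ⊆ X ∧ closure (S t) ∩ X ⊆ S t) →
        (∀ t₁ ∈ T, ∀ t₂ ∈ T, ∃ t₃ ∈ T, S t₃ ⊆ S t₁ ∩ S t₂) →
        (⋂ t ∈ T, S t).Nonempty) :
    ∃ r : F, ∀ x ∈ X, ∀ i, |x i| ≤ r := by
  classical
  by_contra hb
  push_neg at hb
  set S : (Fin 1 → F) → Set (Fin n → F) := fun t => {x | x ∈ X ∧ ∃ i, t 0 ≤ |x i|} with hS
  have hCcl : ∀ t : Fin 1 → F, IsClosed {x : Fin n → F | ∃ i, t 0 ≤ |x i|} := by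
    intro t
    have : {x : Fin n → F | ∃ i, t 0 ≤ |x i|} =
        ⋃ i : Fin n, ({x | t 0 ≤ x i} ∪ {x | x i ≤ -(t 0)}) := by
      ext x
      simp only [mem_setOf_eq, mem_iUnion, mem_union]
      refine exists_congr fun i => ?_
      rw [le_abs]
      constructor
      · rintro (h | h)
        · exact Or.inl h
        · exact Or.inr (by linarith)
      · rintro (h | h)
        · exact Or.inl h
        · exact Or.inr (by linarith)
    rw [this]
    exact isClosed_iUnion_of_finite fun i =>
      (isClosed_le continuous_const (continuous_apply i)).union
        (isClosed_le (continuous_apply i) continuous_const)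
  have hdef : (Set.univ : Set F).Definable L
      {p : Fin 1 ⊕ Fin n → F | p ∘ Sum.inl ∈ (univ : Set (Fin 1 → F)) ∧
        p ∘ Sum.inr ∈ S (p ∘ Sum.inl)} := by
    have h1 := hX.preimage_comp (Sum.inr : Fin n → Fin 1 ⊕ Fin n)
    have h3 := h1.inter (definable_biUnion_finset (fun i : Fin n =>
      (dle hlt (Sum.inl 0 : Fin 1 ⊕ Fin n) (Sum.inr i)).union
        (daddLE0 hadd hlt (Sum.inr i) (Sum.inl 0))) Finset.univ)
    convert h3 using 1
    ext p
    simp only [hS, mem_setOf_eq, mem_univ, true_and, mem_inter_iff, mem_preimage,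
      Finset.mem_univ, mem_iUnion, mem_union, exists_true_left, Function.comp_apply]
    refine and_congr_right fun _ => exists_congr fun i => ?_
    rw [le_abs]
    constructor
    · rintro (h | h)
      · exact Or.inl h
      · exact Or.inr (by linarith)
    · rintro (h | h)
      · exact Or.inl h
      · exact Or.inr (by linarith)
  have hmem' : ∀ t ∈ (univ : Set (Fin 1 → F)), (S t).Nonempty ∧ S t ⊆ X ∧
      closure (S t) ∩ X ⊆ S t := by
    intro t _
    refine ⟨?_, fun x hx => hx.1, ?_⟩
    · obtain ⟨x, hxX, i, hi⟩ := hb (t 0)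
      exact ⟨x, hxX, i, hi.le⟩
    · intro x ⟨hxc, hxX⟩
      have : closure (S t) ⊆ {x : Fin n → F | ∃ i, t 0 ≤ |x i|} := by
        refine closure_minimal (fun y hy => hy.2) (hCcl t)
      exact ⟨hxX, this hxc⟩
  have hfil' : ∀ t₁ ∈ (univ : Set (Fin 1 → F)), ∀ t₂ ∈ (univ : Set (Fin 1 → F)),
      ∃ t₃ ∈ (univ : Set (Fin 1 → F)), S t₃ ⊆ S t₁ ∩ S t₂ := by
    intro t₁ _ t₂ _
    refine ⟨fun _ => max (t₁ 0) (t₂ 0), mem_univ _, fun x hx => ?_⟩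
    obtain ⟨hxX, i, hi⟩ := hx
    exact ⟨⟨hxX, i, le_trans (le_max_left _ _) hi⟩, ⟨hxX, i, le_trans (le_max_right _ _) hi⟩⟩
  obtain ⟨x, hx⟩ := H 1 univ S ⟨fun _ => 0, mem_univ _⟩ hdef hmem' hfil'
  rw [mem_iInter₂] at hx
  obtain ⟨-, i, hi⟩ := hx (fun _ => 1 + ∑ j, |x j|) (mem_univ _)
  have hi2 : (1 : F) + ∑ j, |x j| ≤ |x i| := hi
  have hsum : |x i| ≤ ∑ j, |x j| :=
    Finset.single_le_sum (fun j _ => abs_nonneg (x j)) (Finset.mem_univ i)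
  linarith

lemma rev_closed
    (hadd : (Set.univ : Set F).Definable L {x : Fin 3 → F | x 0 + x 1 = x 2})
    (hlt : (Set.univ : Set F).Definable L {x : Fin 2 → F | x 0 < x 1})
    (n : ℕ) (X : Set (Fin n → F))
    (hX : (Set.univ : Set F).Definable L X)
    (H : ∀ (m : ℕ) (T : Set (Fin m → F)) (S : (Fin m → F) → Set (Fin n → F)),
        T.Nonempty →
        (Set.univ : Set F).Definable L
          {p : Fin m ⊕ Fin n → F | p ∘ Sum.inl ∈ T ∧ p ∘ Sum.inr ∈ S (p ∘ Sum.inl)} →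
        (∀ t ∈ T, (S t).Nonempty ∧ S t ⊆ X ∧ closure (S t) ∩ X ⊆ S t) →
        (∀ t₁ ∈ T, ∀ t₂ ∈ T, ∃ t₃ ∈ T, S t₃ ⊆ S t₁ ∩ S t₂) →
        (⋂ t ∈ T, S t).Nonempty) :
    IsClosed X := by
  classical
  by_contra hcl
  have hex : ∃ x0, x0 ∈ closure X ∧ x0 ∉ X := by
    by_contra h
    push_neg at h
    exact hcl (isClosed_of_closure_subset fun y hy => h y hy)
  obtain ⟨x0, hx0c, hx0n⟩ := hex
  set T : Set (Fin 1 → F) := {e | 0 < e 0} with hT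
  set S : (Fin 1 → F) → Set (Fin n → F) :=
    fun e => {x | x ∈ X ∧ ∀ i, |x i - x0 i| ≤ e 0} with hS
  have hCcl : ∀ e : Fin 1 → F, IsClosed {x : Fin n → F | ∀ i, |x i - x0 i| ≤ e 0} := by
    intro e
    have : {x : Fin n → F | ∀ i, |x i - x0 i| ≤ e 0} =
        ⋂ i : Fin n, ({x | x i ≤ x0 i + e 0} ∩ {x | x0 i ≤ x i + e 0}) := by
      ext x
      simp only [mem_setOf_eq, mem_iInter, mem_inter_iff]
      refine forall_congr' fun i => ?_
      rw [abs_le]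
      constructor
      · rintro ⟨h1, h2⟩
        exact ⟨by linarith, by linarith⟩
      · rintro ⟨h1, h2⟩
        exact ⟨by linarith, by linarith⟩
    rw [this]
    exact isClosed_iInter fun i =>
      (isClosed_le (continuous_apply i) continuous_const).inter
        (isClosed_le continuous_const ((continuous_apply i).add continuous_const))
  have hdef : (Set.univ : Set F).Definable L
      {p : Fin 1 ⊕ Fin n → F | p ∘ Sum.inl ∈ T ∧ p ∘ Sum.inr ∈ S (p ∘ Sum.inl)} := by
    have h1 := hX.preimage_comp (Sum.inr : Fin n → Fin 1 ⊕ Fin n)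
    have h2 := dposC (F := F) hlt (Sum.inl 0 : Fin 1 ⊕ Fin n)
    have h3 := definable_biInter_finset (fun i : Fin n =>
      (dleAddC hadd hlt (Sum.inr i : Fin 1 ⊕ Fin n) (Sum.inl 0) (x0 i)).inter
        (dgeAddC hadd hlt (Sum.inr i : Fin 1 ⊕ Fin n) (Sum.inl 0) (x0 i))) Finset.univ
    have h4 := (h2.inter h1).inter h3
    convert h4 using 1
    ext p
    simp only [hS, hT, mem_setOf_eq, mem_inter_iff, mem_preimage, Finset.mem_univ,
      mem_iInter, exists_true_left, true_and, Function.comp_apply]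
    constructor
    · rintro ⟨h5, h6, h7⟩
      refine ⟨⟨h5, h6⟩, fun i _ => ?_⟩
      have := abs_le.1 (h7 i)
      exact ⟨by linarith [this.2], by linarith [this.1]⟩
    · rintro ⟨⟨h5, h6⟩, h7⟩
      refine ⟨h5, h6, fun i => ?_⟩
      obtain ⟨ha, hb⟩ := h7 i trivial
      rw [abs_le]
      exact ⟨by linarith, by linarith⟩
  have hmem' : ∀ e ∈ T, (S e).Nonempty ∧ S e ⊆ X ∧ closure (S e) ∩ X ⊆ S e := by
    intro e he
    refine ⟨?_, fun x hx => hx.1, ?_⟩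
    · have hBopen : IsOpen (⋂ i : Fin n, (fun x : Fin n → F => x i) ⁻¹'
          Ioo (x0 i - e 0) (x0 i + e 0)) :=
        isOpen_iInter_of_finite fun i => isOpen_Ioo.preimage (continuous_apply i)
      have hx0B : x0 ∈ ⋂ i : Fin n, (fun x : Fin n → F => x i) ⁻¹'
          Ioo (x0 i - e 0) (x0 i + e 0) := by
        simp only [mem_iInter, mem_preimage, mem_Ioo]
        intro i
        have he' : (0 : F) < e 0 := he
        exact ⟨by linarith, by linarith⟩
      obtain ⟨x, hxB, hxX⟩ := mem_closure_iff.1 hx0c _ hBopen hx0B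
      refine ⟨x, hxX, fun i => ?_⟩
      simp only [mem_iInter, mem_preimage, mem_Ioo] at hxB
      obtain ⟨h1, h2⟩ := hxB i
      rw [abs_le]
      exact ⟨by linarith, by linarith⟩
    · intro x ⟨hxc, hxX⟩
      have hsub : closure (S e) ⊆ {x : Fin n → F | ∀ i, |x i - x0 i| ≤ e 0} :=
        closure_minimal (fun y hy => hy.2) (hCcl e)
      exact ⟨hxX, hsub hxc⟩
  have hfil' : ∀ t₁ ∈ T, ∀ t₂ ∈ T, ∃ t₃ ∈ T, S t₃ ⊆ S t₁ ∩ S t₂ := by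
    intro t₁ h₁ t₂ h₂
    refine ⟨fun _ => min (t₁ 0) (t₂ 0), lt_min h₁ h₂, fun x hx => ?_⟩
    obtain ⟨hxX, hbox⟩ := hx
    exact ⟨⟨hxX, fun i => le_trans (hbox i) (min_le_left _ _)⟩,
      ⟨hxX, fun i => le_trans (hbox i) (min_le_right _ _)⟩⟩
  obtain ⟨x, hx⟩ := H 1 T S ⟨fun _ => 1, one_pos⟩ hdef hmem' hfil'
  rw [mem_iInter₂] at hx
  have hxX : x ∈ X := (hx (fun _ => 1) one_pos).1
  have hxeq : x = x0 := by
    funext i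
    have hb : ∀ ε : F, 0 < ε → |x i - x0 i| ≤ ε := by
      intro ε hε
      exact (hx (fun _ => ε) hε).2 i
    by_contra hne
    have habs : 0 < |x i - x0 i| := abs_pos.2 (sub_ne_zero.2 hne)
    have := hb (|x i - x0 i| / 2) (by positivity)
    linarith
  exact hx0n (hxeq ▸ hxX)

end Reverse



/-- **Definable compactness criterion.**
`F` is a definably complete expansion of an ordered field in a language `L`.  A definable
set `X ⊆ F^n` is bounded (contained in a box `[−r,r]^n`) and closed if and only if it is
definably compact: for every definable filtered collection `{S t | t ∈ T}` of nonempty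
closed subsets of `X` (closed in the subspace topology of `X`), the intersection
`⋂ t ∈ T, S t` is nonempty. -/
theorem definably_compact_iff_bounded_closed
    {L : FirstOrder.Language} {F : Type*} [Field F] [LinearOrder F] [IsStrictOrderedRing F] [L.Structure F]
    [TopologicalSpace F] [OrderTopology F]
    -- F is an expansion of an ordered field: +, ·, < are definable with parameters
    (hadd : (Set.univ : Set F).Definable L {x : Fin 3 → F | x 0 + x 1 = x 2})
    (hmul : (Set.univ : Set F).Definable L {x : Fin 3 → F | x 0 * x 1 = x 2})
    (hlt : (Set.univ : Set F).Definable L {x : Fin 2 → F | x 0 < x 1})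
    -- F is definably complete
    (hdc : ∀ s : Set F, (Set.univ : Set F).Definable₁ L s → s.Nonempty → BddAbove s →
      ∃ a : F, IsLUB s a)
    (n : ℕ) (X : Set (Fin n → F))
    (hX : (Set.univ : Set F).Definable L X) :
    ((∃ r : F, ∀ x ∈ X, ∀ i, |x i| ≤ r) ∧ IsClosed X) ↔
      ∀ (m : ℕ) (T : Set (Fin m → F)) (S : (Fin m → F) → Set (Fin n → F)),
        T.Nonempty →
        -- the parameterized family {S t | t ∈ T} is definable
        (Set.univ : Set F).Definable L
          {p : Fin m ⊕ Fin n → F | p ∘ Sum.inl ∈ T ∧ p ∘ Sum.inr ∈ S (p ∘ Sum.inl)} →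
        -- the members are nonempty subsets of X, closed in X
        (∀ t ∈ T, (S t).Nonempty ∧ S t ⊆ X ∧ closure (S t) ∩ X ⊆ S t) →
        -- the collection is filtered
        (∀ t₁ ∈ T, ∀ t₂ ∈ T, ∃ t₃ ∈ T, S t₃ ⊆ S t₁ ∩ S t₂) →
        (⋂ t ∈ T, S t).Nonempty := by
  constructor
  · rintro ⟨⟨r, hr⟩, hXcl⟩ m T S hTne hFam hmem hfil
    exact forward_dir hadd hlt hdc n X r hr hXcl m T S hTne hFam hmem hfil
  · intro H
    exact ⟨rev_bounded hadd hlt n X hX H, rev_closed hadd hlt n X hX H⟩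
end

section
/- Let F be a definably complete expansion of an ordered field, X a nonempty definable, bounded and closed subset of F^n, and f : X → [0,∞) a definable lower semi-continuous function. Then f attains its infimum: inf f(X) ∈ f(X). -/
open FirstOrder Set Topology

open FirstOrder.Language

namespace DLSC
variable {L : FirstOrder.Language} {F : Type*} [Field F] [LinearOrder F] [IsStrictOrderedRing F] [L.Structure F]

abbrev Def (L : FirstOrder.Language) {F : Type*} [L.Structure F] {α : Type*}
    (s : Set (α → F)) : Prop := (Set.univ : Set F).Definable L s

lemma def_congr {α : Type*} {s t : Set (α → F)} (h : Def L s)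
    (e : ∀ x, x ∈ t ↔ x ∈ s) : Def L t := by
  have : t = s := Set.ext e
  rw [this]; exact h

lemma defConst {α : Type*} (i : α) (c : F) : Def L {x : α → F | x i = c} := by
  refine ⟨Term.equal (Term.var i) ((L.con (⟨c, mem_univ c⟩ : (Set.univ : Set F))).term), ?_⟩
  ext x
  simp [Formula.realize_equal, Term.realize_con]

lemma def_exists {α β : Type*} [Finite α] [Finite β] {S : Set ((α ⊕ β) → F)}
    (h : Def L S) : Def L {x : α → F | ∃ y : β → F, Sum.elim x y ∈ S} := by
  refine def_congr (h.image_comp Sum.inl) fun x => ?_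
  constructor
  · rintro ⟨y, hy⟩
    exact ⟨Sum.elim x y, hy, rfl⟩
  · rintro ⟨p, hp, rfl⟩
    refine ⟨p ∘ Sum.inr, ?_⟩
    have : Sum.elim (p ∘ Sum.inl) (p ∘ Sum.inr) = p := by
      funext v; cases v <;> rfl
    rwa [this]

lemma def_iInter {α ι : Type*} [Finite ι] {s : ι → Set (α → F)}
    (h : ∀ i, Def L (s i)) : Def L (⋂ i, s i) := by
  cases nonempty_fintype ι
  have : (⋂ i, s i) = ⋂ i ∈ Finset.univ (α := ι), s i := by simp
  rw [this]
  exact Set.definable_biInter_finset h Finset.univ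

lemma def_fiber {α β : Type*} [Finite α] [Finite β] {S : Set ((α ⊕ β) → F)}
    (h : Def L S) (c : β → F) : Def L {x : α → F | Sum.elim x c ∈ S} := by
  have h2 : Def L (S ∩ ⋂ b : β, {p : (α ⊕ β) → F | p (Sum.inr b) = c b}) :=
    h.inter (def_iInter fun b => defConst (Sum.inr b) (c b))
  refine def_congr (def_exists h2) fun x => ?_
  simp only [mem_setOf_eq, mem_inter_iff, mem_iInter]
  constructor
  · intro hx
    exact ⟨c, hx, fun b => rfl⟩
  · rintro ⟨y, hy, hc⟩
    have : y = c := funext hc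
    rwa [this] at hy

variable (hlt : Def L {x : Fin 2 → F | x 0 < x 1})
variable (hadd : Def L {x : Fin 3 → F | x 0 + x 1 = x 2})

section
include hlt

lemma defLT {α : Type*} (i j : α) : Def L {x : α → F | x i < x j} := by
  refine def_congr (hlt.preimage_comp (![i, j])) fun x => ?_
  simp [Set.preimage_setOf_eq]

lemma defLE {α : Type*} (i j : α) : Def L {x : α → F | x i ≤ x j} := by
  refine def_congr (defLT hlt j i).compl fun x => ?_
  simp

end

include hlt hadd in
lemma defLEAdd {α : Type*} [Finite α] (i j k : α) :
    Def L {x : α → F | x i ≤ x j + x k} := by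
  have h1 : Def L {p : (α ⊕ Fin 1) → F | p (Sum.inl j) + p (Sum.inl k) = p (Sum.inr 0)} := by
    refine def_congr (hadd.preimage_comp (![Sum.inl j, Sum.inl k, Sum.inr 0])) fun x => ?_
    simp [Set.preimage_setOf_eq]
  refine def_congr (def_exists (h1.inter (defLE hlt (Sum.inl i) (Sum.inr 0)))) fun x => ?_
  simp only [mem_setOf_eq, mem_inter_iff]
  constructor
  · intro hx
    exact ⟨fun _ => x j + x k, rfl, hx⟩
  · rintro ⟨y, hy, hle⟩
    simp only [Sum.elim_inl, Sum.elim_inr] at hy hle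
    rw [← hy] at hle; exact hle

include hlt hadd in
lemma defLTAdd {α : Type*} [Finite α] (i j k : α) :
    Def L {x : α → F | x i < x j + x k} := by
  have h1 : Def L {p : (α ⊕ Fin 1) → F | p (Sum.inl j) + p (Sum.inl k) = p (Sum.inr 0)} := by
    refine def_congr (hadd.preimage_comp (![Sum.inl j, Sum.inl k, Sum.inr 0])) fun x => ?_
    simp [Set.preimage_setOf_eq]
  refine def_congr (def_exists (h1.inter (defLT hlt (Sum.inl i) (Sum.inr 0)))) fun x => ?_
  simp only [mem_setOf_eq, mem_inter_iff]
  constructor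
  · intro hx
    exact ⟨fun _ => x j + x k, rfl, hx⟩
  · rintro ⟨y, hy, hle⟩
    simp only [Sum.elim_inl, Sum.elim_inr] at hy hle
    rw [← hy] at hle; exact hle

include hlt in
lemma defLTConst {α : Type*} [Finite α] (i : α) (c : F) :
    Def L {x : α → F | x i < c} := by
  refine def_congr (def_fiber (defLT hlt (Sum.inl i) (Sum.inr (0 : Fin 1))) (fun _ => c))
    fun x => ?_
  simp

include hlt in
lemma defConstLT {α : Type*} [Finite α] (i : α) (c : F) :
    Def L {x : α → F | c < x i} := by
  refine def_congr (def_fiber (defLT hlt (Sum.inr (0 : Fin 1)) (Sum.inl i)) (fun _ => c))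
    fun x => ?_
  simp

include hlt hadd in
lemma defLEAddConst {α : Type*} [Finite α] (i j : α) (c : F) :
    Def L {x : α → F | x i ≤ x j + c} := by
  refine def_congr (def_fiber
    (defLEAdd hlt hadd (Sum.inl i) (Sum.inl j) (Sum.inr (0 : Fin 1))) (fun _ => c)) fun x => ?_
  simp

include hlt hadd in
lemma defConstLEAdd {α : Type*} [Finite α] (i j : α) (c : F) :
    Def L {x : α → F | c ≤ x i + x j} := by
  refine def_congr (def_fiber
    (defLEAdd hlt hadd (Sum.inr (0:Fin 1)) (Sum.inl i) (Sum.inl j)) (fun _ => c)) fun x => ?_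
  simp

include hlt hadd in
lemma defLTAddConst {α : Type*} [Finite α] (i j : α) (c : F) :
    Def L {x : α → F | x i < x j + c} := by
  refine def_congr (def_fiber
    (defLTAdd hlt hadd (Sum.inl i) (Sum.inl j) (Sum.inr (0 : Fin 1))) (fun _ => c)) fun x => ?_
  simp

include hlt in
/-- Existence of infima from definable completeness. -/
lemma exists_isGLB
    (hdc : ∀ s : Set F, (Set.univ : Set F).Definable₁ L s → s.Nonempty → BddAbove s →
      ∃ a : F, IsLUB s a)
    {s : Set F} (hs : (Set.univ : Set F).Definable₁ L s) (hne : s.Nonempty)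
    (hbd : BddBelow s) : ∃ a : F, IsGLB s a := by
  have hs' : Def L {x : Fin 1 → F | x 0 ∈ s} := hs
  -- lower bounds of s are definable
  have hSr : Def L {p : Fin 1 ⊕ Fin 1 → F | p (Sum.inr 0) ∈ s} := by
    refine def_congr (hs'.preimage_comp (fun _ : Fin 1 => Sum.inr 0)) fun p => ?_
    exact Iff.rfl
  have hLB : (Set.univ : Set F).Definable₁ L (lowerBounds s) := by
    have h1 : Def L {x : Fin 1 → F |
        ∃ y : Fin 1 → F, Sum.elim x y ∈
          ({p : Fin 1 ⊕ Fin 1 → F | p (Sum.inr 0) ∈ s} ∩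
           {p | p (Sum.inr 0) < p (Sum.inl 0)})} :=
      def_exists (hSr.inter (defLT hlt (Sum.inr 0) (Sum.inl 0)))
    refine def_congr h1.compl fun x => ?_
    simp only [mem_setOf_eq, mem_compl_iff, mem_inter_iff, Sum.elim_inl, Sum.elim_inr,
      not_exists]
    constructor
    · intro hx y hy
      rcases hy with ⟨hy1, hy2⟩
      exact absurd hy2 (not_lt.2 (hx hy1))
    · intro hx y hy
      by_contra hc
      exact hx (fun _ => y) ⟨hy, lt_of_not_ge hc⟩
  obtain ⟨a, ha⟩ := hdc (lowerBounds s) hLB hbd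
    (hne.imp fun y hy => fun c hc => hc hy)
  refine ⟨a, fun y hy => ha.2 fun c hc => hc hy, fun c hc => ha.1 hc⟩


include hlt hadd in
lemma defSt {n : ℕ} {X : Set (Fin n → F)} (hX : Def L X)
    {f : (Fin n → F) → F}
    (hf : Def L {p : Fin n ⊕ Fin 1 → F | p ∘ Sum.inl ∈ X ∧ f (p ∘ Sum.inl) = p (Sum.inr 0)})
    {i : ℕ} (hi : i < n) (v : Fin i → F) :
    Def L {q : Fin 3 → F | ∃ x, x ∈ X ∧ f x ≤ q 1 ∧
      (∀ j : Fin i, |x (Fin.castLE hi.le j) - v j| ≤ q 2) ∧ x ⟨i, hi⟩ = q 0} := by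
  classical
  have C2 : Def L {p : (Fin 3 ⊕ Fin n) → F |
      (p ∘ Sum.inr) ∈ X ∧ f (p ∘ Sum.inr) ≤ p (Sum.inl 1)} := by
    let Q : Fin n ⊕ Fin 1 → (Fin 3 ⊕ Fin n) ⊕ Fin 1 :=
      Sum.elim (fun j => Sum.inl (Sum.inr j)) (fun _ => Sum.inr 0)
    have G1 := hf.preimage_comp Q
    refine def_congr (def_exists (G1.inter
      (defLE hlt (Sum.inr (0 : Fin 1)) (Sum.inl (Sum.inl 1))))) fun p => ?_
    simp only [mem_setOf_eq, mem_inter_iff, mem_preimage]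
    have e1 : ∀ y : Fin 1 → F, ((Sum.elim p y ∘ Q) ∘ Sum.inl) = p ∘ Sum.inr :=
      fun _ => funext fun j => rfl
    constructor
    · rintro ⟨hpX, hpf⟩
      refine ⟨fun _ => f (p ∘ Sum.inr), ⟨?_, ?_⟩, hpf⟩
      · rw [show ((Sum.elim p (fun _ => f (p ∘ Sum.inr)) ∘ Q) ∘ Sum.inl) = p ∘ Sum.inr
          from e1 _]
        exact hpX
      · rw [show ((Sum.elim p (fun _ => f (p ∘ Sum.inr)) ∘ Q) ∘ Sum.inl) = p ∘ Sum.inr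
          from e1 _]
        rfl
    · rintro ⟨y, ⟨hy1, hy2⟩, hy3⟩
      rw [e1 y] at hy1 hy2
      refine ⟨hy1, ?_⟩
      rw [hy2]; exact hy3
  have C3 : Def L (⋂ j : Fin i,
      ({p : (Fin 3 ⊕ Fin n) → F | p (Sum.inr (Fin.castLE hi.le j)) ≤ p (Sum.inl 2) + v j} ∩
       {p : (Fin 3 ⊕ Fin n) → F | v j ≤ p (Sum.inr (Fin.castLE hi.le j)) + p (Sum.inl 2)})) :=
    def_iInter fun j =>
      (defLEAddConst hlt hadd _ _ _).inter (defConstLEAdd hlt hadd _ _ _)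
  have C4 : Def L ({p : (Fin 3 ⊕ Fin n) → F | p (Sum.inr ⟨i, hi⟩) ≤ p (Sum.inl 0)} ∩
      {p : (Fin 3 ⊕ Fin n) → F | p (Sum.inl 0) ≤ p (Sum.inr ⟨i, hi⟩)}) :=
    (defLE hlt _ _).inter (defLE hlt _ _)
  refine def_congr (def_exists ((C2.inter C3).inter C4)) fun q => ?_
  simp only [mem_setOf_eq, mem_inter_iff, mem_iInter, Sum.elim_inl, Sum.elim_inr]
  constructor
  · rintro ⟨x, hxX, hxf, hxc, hxi⟩
    have e : (Sum.elim q x ∘ Sum.inr) = x := funext fun j => rfl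
    refine ⟨x, ⟨⟨?_, ?_⟩, fun j => ?_⟩, by rw [hxi], by rw [hxi]⟩
    · rw [e]; exact hxX
    · rw [e]; exact hxf
    have h := abs_sub_le_iff.1 (hxc j)
    exact ⟨by linarith [h.1], by linarith [h.2]⟩
  · rintro ⟨x, ⟨⟨hxX, hxf⟩, hxc⟩, hc1, hc2⟩
    have e : (Sum.elim q x ∘ Sum.inr) = x := funext fun j => rfl
    rw [e] at hxX hxf
    refine ⟨x, hxX, hxf, fun j => ?_, le_antisymm hc1 hc2⟩
    have h := hxc j
    exact abs_sub_le_iff.2 ⟨by linarith [h.1], by linarith [h.2]⟩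


include hlt hadd in
lemma defG {S3 : Set (Fin 3 → F)} (hS3 : Def L S3) (m : F) :
    Def L {u : Fin 1 → F | ∃ t ε : F, m < t ∧ 0 < ε ∧
      (∀ s : F, ![s, t, ε] ∈ S3 → u 0 ≤ s) ∧
      (∀ δ : F, 0 < δ → ∃ s : F, ![s, t, ε] ∈ S3 ∧ s < u 0 + δ)} := by
  classical
  -- lower-bound clause, over Fin 3 (w,t,ε)
  have LB : Def L {q : Fin 3 → F | ∀ s : F, ![s, q 1, q 2] ∈ S3 → q 0 ≤ s} := by
    have StA := hS3.preimage_comp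
      (![Sum.inr 0, Sum.inl 1, Sum.inl 2] : Fin 3 → Fin 3 ⊕ Fin 1)
    refine def_congr (def_exists (StA.inter
      (defLT hlt (Sum.inr (0 : Fin 1)) (Sum.inl 0)))).compl fun q => ?_
    simp only [mem_setOf_eq, mem_compl_iff, mem_inter_iff, mem_preimage, not_exists]
    constructor
    · intro h y hy
      have e : (Sum.elim q y ∘ ![Sum.inr 0, Sum.inl 1, Sum.inl 2]) = ![y 0, q 1, q 2] := by
        funext k; fin_cases k <;> rfl
      rw [e] at hy
      rcases hy with ⟨hy1, hy2⟩
      exact absurd hy2 (not_lt.2 (h _ hy1))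
    · intro h s hs
      by_contra hc
      refine h (fun _ : Fin 1 => s) ?_
      have e : (Sum.elim q (fun _ : Fin 1 => s) ∘ ![Sum.inr 0, Sum.inl 1, Sum.inl 2])
          = ![s, q 1, q 2] := by
        funext k; fin_cases k <;> rfl
      rw [e]
      exact ⟨hs, lt_of_not_ge hc⟩
  -- approximation clause
  have APX : Def L {q : Fin 3 → F | ∀ δ : F, 0 < δ →
      ∃ s : F, ![s, q 1, q 2] ∈ S3 ∧ s < q 0 + δ} := by
    have StB := hS3.preimage_comp
      (![Sum.inr 0, Sum.inl (Sum.inl 1), Sum.inl (Sum.inl 2)] :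
        Fin 3 → (Fin 3 ⊕ Fin 1) ⊕ Fin 1)
    have ExS : Def L {p : (Fin 3 ⊕ Fin 1) → F |
        ∃ s : F, ![s, p (Sum.inl 1), p (Sum.inl 2)] ∈ S3 ∧ s < p (Sum.inl 0) + p (Sum.inr 0)} := by
      refine def_congr (def_exists (StB.inter
        (defLTAdd hlt hadd (Sum.inr (0 : Fin 1)) (Sum.inl (Sum.inl 0))
          (Sum.inl (Sum.inr 0))))) fun p => ?_
      simp only [mem_setOf_eq, mem_inter_iff, mem_preimage]
      constructor
      · rintro ⟨s, hs1, hs2⟩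
        refine ⟨fun _ : Fin 1 => s, ?_, hs2⟩
        have e : (Sum.elim p (fun _ : Fin 1 => s) ∘
            ![Sum.inr 0, Sum.inl (Sum.inl 1), Sum.inl (Sum.inl 2)])
            = ![s, p (Sum.inl 1), p (Sum.inl 2)] := by
          funext k; fin_cases k <;> rfl
        rw [e]; exact hs1
      · rintro ⟨z, hz1, hz2⟩
        refine ⟨z 0, ?_, hz2⟩
        have e : (Sum.elim p z ∘
            ![Sum.inr 0, Sum.inl (Sum.inl 1), Sum.inl (Sum.inl 2)])
            = ![z 0, p (Sum.inl 1), p (Sum.inl 2)] := by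
          funext k; fin_cases k <;> rfl
        rw [e] at hz1; exact hz1
    refine def_congr (def_exists ((defConstLT hlt (Sum.inr (0 : Fin 1)) (0 : F)).inter
      ExS.compl)).compl fun q => ?_
    simp only [mem_setOf_eq, mem_compl_iff, mem_inter_iff, not_exists, Sum.elim_inl,
      Sum.elim_inr]
    constructor
    · intro h y hy
      obtain ⟨s, hs1, hs2⟩ := h (y 0) hy.1
      exact hy.2 s ⟨hs1, hs2⟩
    · intro h δ hδ
      by_contra hc
      push_neg at hc
      refine h (fun _ : Fin 1 => δ) ⟨hδ, fun s hs => ?_⟩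
      exact absurd hs.2 (not_lt.2 (hc s hs.1))
  have G3 : Def L ({q : Fin 3 → F | m < q 1} ∩ ({q : Fin 3 → F | 0 < q 2} ∩
      ({q : Fin 3 → F | ∀ s : F, ![s, q 1, q 2] ∈ S3 → q 0 ≤ s} ∩
       {q : Fin 3 → F | ∀ δ : F, 0 < δ →
          ∃ s : F, ![s, q 1, q 2] ∈ S3 ∧ s < q 0 + δ}))) :=
    (defConstLT hlt 1 m).inter ((defConstLT hlt 2 (0 : F)).inter (LB.inter APX))
  have GA := G3.preimage_comp (![Sum.inl 0, Sum.inr 0, Sum.inr 1] : Fin 3 → Fin 1 ⊕ Fin 2)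
  refine def_congr (def_exists GA) fun u => ?_
  simp only [mem_setOf_eq, mem_preimage, mem_inter_iff]
  constructor
  · rintro ⟨t, ε, h1, h2, h3, h4⟩
    refine ⟨![t, ε], ?_⟩
    have e : (Sum.elim u ![t, ε] ∘ ![Sum.inl 0, Sum.inr 0, Sum.inr 1]) = ![u 0, t, ε] := by
      funext k; fin_cases k <;> rfl
    rw [e]
    exact ⟨h1, h2, h3, h4⟩
  · rintro ⟨y, hy⟩
    have e : (Sum.elim u y ∘ ![Sum.inl 0, Sum.inr 0, Sum.inr 1]) = ![u 0, y 0, y 1] := by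
      funext k; fin_cases k <;> rfl
    rw [e] at hy
    exact ⟨y 0, y 1, hy.1, hy.2.1, hy.2.2.1, hy.2.2.2⟩


include hlt hadd in
lemma step_lemma
    (hdc : ∀ s : Set F, (Set.univ : Set F).Definable₁ L s → s.Nonempty → BddAbove s →
      ∃ a : F, IsLUB s a)
    {n : ℕ} {X : Set (Fin n → F)} (hX : Def L X)
    {f : (Fin n → F) → F}
    (hf : Def L {p : Fin n ⊕ Fin 1 → F | p ∘ Sum.inl ∈ X ∧ f (p ∘ Sum.inl) = p (Sum.inr 0)})
    {r : F} (hr : ∀ x ∈ X, ∀ k, |x k| ≤ r)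
    (m : F)
    {i : ℕ} (hi : i < n) (v : Fin i → F)
    (hv : ∀ t, m < t → ∀ ε, 0 < ε → ∃ x, x ∈ X ∧ f x ≤ t ∧
      ∀ j : Fin i, |x (Fin.castLE hi.le j) - v j| ≤ ε) :
    ∃ w : F, ∀ t, m < t → ∀ ε, 0 < ε → ∃ x, x ∈ X ∧ f x ≤ t ∧
      ∀ j : Fin (i+1), |x (Fin.castLE hi j) - (Fin.snoc v w : Fin (i+1) → F) j| ≤ ε := by
  classical
  set St : Set (Fin 3 → F) := {q : Fin 3 → F | ∃ x, x ∈ X ∧ f x ≤ q 1 ∧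
      (∀ j : Fin i, |x (Fin.castLE hi.le j) - v j| ≤ q 2) ∧ x ⟨i, hi⟩ = q 0} with hStdef
  have hSt : Def L St := defSt hlt hadd hX hf hi v
  have memS : ∀ s t ε : F, (![s, t, ε] ∈ St ↔ ∃ x, x ∈ X ∧ f x ≤ t ∧
      (∀ j : Fin i, |x (Fin.castLE hi.le j) - v j| ≤ ε) ∧ x ⟨i, hi⟩ = s) := by
    intro s t ε
    simp [hStdef]
  -- monotonicity of the family
  have memS_mono : ∀ {s t ε t' ε' : F}, t ≤ t' → ε ≤ ε' → ![s, t, ε] ∈ St →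
      ![s, t', ε'] ∈ St := by
    intro s t ε t' ε' htt hεε hmem
    obtain ⟨x, h1, h2, h3, h4⟩ := (memS s t ε).1 hmem
    exact (memS s t' ε').2 ⟨x, h1, le_trans h2 htt, fun j => le_trans (h3 j) hεε, h4⟩
  -- definability of each level set
  have hSv : ∀ t ε : F, (Set.univ : Set F).Definable₁ L {s : F | ![s, t, ε] ∈ St} := by
    intro t ε
    have h1 := def_fiber (hSt.preimage_comp
      (![Sum.inl 0, Sum.inr 0, Sum.inr 1] : Fin 3 → Fin 1 ⊕ Fin 2)) (![t, ε])
    refine def_congr h1 fun u => ?_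
    simp only [mem_setOf_eq, mem_preimage]
    have e : (Sum.elim u (![t, ε] : Fin 2 → F) ∘
        (![Sum.inl 0, Sum.inr 0, Sum.inr 1] : Fin 3 → Fin 1 ⊕ Fin 2)) = ![u 0, t, ε] := by
      funext k; fin_cases k <;> rfl
    rw [e]
  -- existence of infima of level sets
  have hinf : ∀ t ε : F, m < t → 0 < ε → ∃ a, IsGLB {s : F | ![s, t, ε] ∈ St} a := by
    intro t ε ht hε
    obtain ⟨x, h1, h2, h3⟩ := hv t ht ε hε
    refine exists_isGLB hlt hdc (hSv t ε) ⟨x ⟨i, hi⟩, (memS _ t ε).2 ⟨x, h1, h2, h3, rfl⟩⟩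
      ⟨-r, fun s hs => ?_⟩
    obtain ⟨x', hx1, _, _, hx4⟩ := (memS s t ε).1 hs
    have := hr x' hx1 ⟨i, hi⟩
    rw [hx4] at this
    exact neg_le_of_abs_le this
  -- level sets are bounded above by r
  have hSub : ∀ {s t ε : F}, ![s, t, ε] ∈ St → s ≤ r := by
    intro s t ε hs
    obtain ⟨x', hx1, _, _, hx4⟩ := (memS s t ε).1 hs
    have := hr x' hx1 ⟨i, hi⟩
    rw [hx4] at this
    exact le_of_abs_le this
  -- the set of infima
  set G : Set F := {w : F | ∃ t ε : F, m < t ∧ 0 < ε ∧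
      (∀ s : F, ![s, t, ε] ∈ St → w ≤ s) ∧
      (∀ δ : F, 0 < δ → ∃ s : F, ![s, t, ε] ∈ St ∧ s < w + δ)} with hGdef
  have hGmem : ∀ (t ε a : F), m < t → 0 < ε → IsGLB {s : F | ![s, t, ε] ∈ St} a → a ∈ G := by
    intro t ε a ht hε ha
    refine ⟨t, ε, ht, hε, fun s hs => ha.1 hs, fun δ hδ => ?_⟩
    by_contra hc
    push_neg at hc
    have : a + δ ≤ a := ha.2 fun s hs => hc s hs
    linarith
  have hG : (Set.univ : Set F).Definable₁ L G := by
    have := defG hlt hadd hSt m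
    exact def_congr this fun u => Iff.rfl
  have hGne : G.Nonempty := by
    obtain ⟨a, ha⟩ := hinf (m + 1) 1 (by linarith) one_pos
    exact ⟨a, hGmem _ _ a (by linarith) one_pos ha⟩
  have hGbdd : BddAbove G := by
    refine ⟨r, fun w hw => ?_⟩
    obtain ⟨t, ε, ht, hε, hlb, hapx⟩ := hw
    obtain ⟨s, hs1, _⟩ := hapx 1 one_pos
    exact le_trans (hlb s hs1) (hSub hs1)
  obtain ⟨w, hwlub⟩ := hdc G hG hGne hGbdd
  refine ⟨w, fun t ht ε hε => ?_⟩
  -- find an element of G close to w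
  have hwit : ∃ b ∈ G, w - ε < b := by
    by_contra hc
    push_neg at hc
    have : w ≤ w - ε := hwlub.2 fun b hb => hc b hb
    linarith
  obtain ⟨b, hbG, hbw⟩ := hwit
  obtain ⟨t', ε', ht', hε', hblb, _⟩ := hbG
  have htm : m < min t t' := lt_min ht ht'
  have hεm : (0:F) < min ε ε' := lt_min hε hε'
  obtain ⟨a, ha⟩ := hinf (min t t') (min ε ε') htm hεm
  have haG : a ∈ G := hGmem _ _ a htm hεm ha
  have hba : b ≤ a := ha.2 fun s hs =>
    hblb s (memS_mono (min_le_right t t') (min_le_right ε ε') hs)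
  have haw : a ≤ w := hwlub.1 haG
  -- now pick s in the small level set with s < w + ε
  have hsex : ∃ s : F, ![s, min t t', min ε ε'] ∈ St ∧ s < w + ε := by
    by_contra hc
    push_neg at hc
    have : w + ε ≤ a := ha.2 fun s hs => hc s hs
    linarith
  obtain ⟨s, hsSt, hslt⟩ := hsex
  have hsge : w - ε < s := lt_of_lt_of_le (lt_of_lt_of_le hbw hba) (ha.1 hsSt)
  obtain ⟨x, hxX, hxf, hxc, hxci⟩ := (memS s (min t t') (min ε ε')).1 hsSt
  refine ⟨x, hxX, le_trans hxf (min_le_left t t'), fun j => ?_⟩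
  induction j using Fin.lastCases with
  | last =>
    have e1 : Fin.castLE hi (Fin.last i) = (⟨i, hi⟩ : Fin n) := rfl
    rw [e1, Fin.snoc_last, hxci]
    rw [abs_sub_le_iff]
    constructor <;> linarith
  | cast j' =>
    have e2 : Fin.castLE hi (Fin.castSucc j') = Fin.castLE hi.le j' := rfl
    rw [e2, Fin.snoc_castSucc]
    exact le_trans (hxc j') (min_le_left ε ε')


include hlt in
lemma defImage
    {n : ℕ} {X : Set (Fin n → F)}
    {f : (Fin n → F) → F}
    (hf : Def L {p : Fin n ⊕ Fin 1 → F | p ∘ Sum.inl ∈ X ∧ f (p ∘ Sum.inl) = p (Sum.inr 0)}) :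
    (Set.univ : Set F).Definable₁ L (f '' X) := by
  classical
  let Q : Fin n ⊕ Fin 1 → Fin 1 ⊕ Fin n := Sum.elim (fun j => Sum.inr j) (fun _ => Sum.inl 0)
  have h1 := hf.preimage_comp Q
  refine def_congr (def_exists h1) fun u => ?_
  simp only [mem_setOf_eq, mem_preimage, mem_image]
  constructor
  · rintro ⟨x, hx, hfx⟩
    refine ⟨x, ?_⟩
    have e : ((Sum.elim u x ∘ Q) ∘ Sum.inl) = x := funext fun j => rfl
    constructor
    · rw [e]; exact hx
    · rw [e]; exact hfx
  · rintro ⟨y, hy1, hy2⟩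
    have e : ((Sum.elim u y ∘ Q) ∘ Sum.inl) = y := funext fun j => rfl
    rw [e] at hy1 hy2
    exact ⟨y, hy1, hy2⟩

omit [L.Structure F] in
lemma box_lemma [TopologicalSpace F] [OrderTopology F]
    {n : ℕ} {U : Set (Fin n → F)} (hU : IsOpen U) {v : Fin n → F} (hv : v ∈ U) :
    ∃ ε : F, 0 < ε ∧ ∀ x : Fin n → F, (∀ j, |x j - v j| ≤ ε) → x ∈ U := by
  classical
  obtain ⟨I, u, h1, h2⟩ := isOpen_pi_iff.1 hU v hv
  have h3 : ∀ a : Fin n, ∃ εa : F, 0 < εa ∧ ∀ y : F, |y - v a| ≤ εa →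
      y ∈ (if a ∈ I then u a else Set.univ) := by
    intro a
    by_cases ha : a ∈ I
    · obtain ⟨l, u', hvm, hsub⟩ :=
        mem_nhds_iff_exists_Ioo_subset.1 ((h1 a ha).1.mem_nhds (h1 a ha).2)
      refine ⟨min (v a - l) (u' - v a) / 2, by
        have := hvm.1; have := hvm.2
        have h1' : (0:F) < v a - l := by linarith
        have h2' : (0:F) < u' - v a := by linarith
        have := lt_min h1' h2'
        linarith, fun y hy => ?_⟩
      rw [if_pos ha]
      have habs := abs_sub_le_iff.1 hy
      have hv1 := hvm.1
      have hv2 := hvm.2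
      refine hsub ⟨?_, ?_⟩
      · linarith [habs.2, min_le_left (v a - l) (u' - v a)]
      · linarith [habs.1, min_le_right (v a - l) (u' - v a)]
    · exact ⟨1, one_pos, fun y _ => by rw [if_neg ha]; exact mem_univ y⟩
  choose εf hεf using h3
  let T : Finset F := Finset.univ.image εf ∪ {1}
  have hT : T.Nonempty := ⟨1, by simp [T]⟩
  refine ⟨T.min' hT, ?_, fun x hx => ?_⟩
  · have := T.min'_mem hT
    simp only [T, Finset.mem_union, Finset.mem_image, Finset.mem_singleton] at this
    rcases this with ⟨a, _, ha⟩ | h1'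
    · rw [← ha]; exact (hεf a).1
    · rw [h1']; exact one_pos
  · refine h2 fun a ha => ?_
    have hle : T.min' hT ≤ εf a := T.min'_le _ (by simp [T])
    have := (hεf a).2 (x a) (le_trans (hx a) hle)
    rwa [if_pos (Finset.mem_coe.1 ha)] at this

end DLSC

/-- **A definable lower semi-continuous function on a definable, bounded and closed set
attains its infimum.**
`F` is a definably complete expansion of an ordered field in a language `L`,
`X ⊆ F^n` is a nonempty definable, bounded and closed set, and `f : X → [0,∞)` is a
definable lower semi-continuous function.  Then `inf f(X) ∈ f(X)`, i.e. there is
`x₀ ∈ X` such that `f x₀` is the greatest lower bound of `f(X)`. -/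
theorem definable_lsc_attains_infimum
    {L : FirstOrder.Language} {F : Type*} [Field F] [LinearOrder F] [IsStrictOrderedRing F] [L.Structure F]
    [TopologicalSpace F] [OrderTopology F]
    -- F is an expansion of an ordered field: +, ·, < are definable with parameters
    (hadd : (Set.univ : Set F).Definable L {x : Fin 3 → F | x 0 + x 1 = x 2})
    (hmul : (Set.univ : Set F).Definable L {x : Fin 3 → F | x 0 * x 1 = x 2})
    (hlt : (Set.univ : Set F).Definable L {x : Fin 2 → F | x 0 < x 1})
    -- F is definably complete
    (hdc : ∀ s : Set F, (Set.univ : Set F).Definable₁ L s → s.Nonempty → BddAbove s →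
      ∃ a : F, IsLUB s a)
    (n : ℕ) (X : Set (Fin n → F)) (hXne : X.Nonempty)
    (hX : (Set.univ : Set F).Definable L X)
    -- X is bounded and closed
    (hbdd : ∃ r : F, ∀ x ∈ X, ∀ i, |x i| ≤ r)
    (hcl : IsClosed X)
    (f : (Fin n → F) → F)
    -- f is definable (its graph over X is definable)
    (hf : (Set.univ : Set F).Definable L
      {p : Fin n ⊕ Fin 1 → F | p ∘ Sum.inl ∈ X ∧ f (p ∘ Sum.inl) = p (Sum.inr 0)})
    -- f takes values in [0,∞) on X
    (hfpos : ∀ x ∈ X, 0 ≤ f x)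
    -- f is lower semi-continuous on X
    (hlsc : LowerSemicontinuousOn f X) :
    ∃ x₀ ∈ X, IsGLB (f '' X) (f x₀) := by
    classical
  obtain ⟨r, hr⟩ := hbdd
  -- the infimum of f over X
  obtain ⟨m, hm⟩ : ∃ m : F, IsGLB (f '' X) m := by
    refine DLSC.exists_isGLB hlt hdc (DLSC.defImage hlt hf) (hXne.image f) ⟨0, ?_⟩
    rintro y ⟨x, hx, rfl⟩
    exact hfpos x hx
  -- the recursive construction of a candidate point
  have hrec : ∀ i : ℕ, ∀ hii : i ≤ n, ∃ v : Fin i → F, ∀ t, m < t → ∀ ε, 0 < ε →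
      ∃ x, x ∈ X ∧ f x ≤ t ∧ ∀ j : Fin i, |x (Fin.castLE hii j) - v j| ≤ ε := by
    intro i
    induction i with
    | zero =>
      intro _
      refine ⟨Fin.elim0, fun t ht ε hε => ?_⟩
      have : ∃ y ∈ f '' X, y < t := by
        by_contra hc
        push_neg at hc
        exact absurd (hm.2 fun y hy => hc y hy) (not_le.2 ht)
      obtain ⟨y, ⟨x, hx, rfl⟩, hyt⟩ := this
      exact ⟨x, hx, le_of_lt hyt, fun j => j.elim0⟩
    | succ k ih =>
      intro hki
      obtain ⟨v, hvv⟩ := ih (Nat.le_of_succ_le hki)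
      obtain ⟨w, hw⟩ := DLSC.step_lemma hlt hadd hdc hX hf hr m (hki : k < n) v hvv
      exact ⟨Fin.snoc v w, hw⟩
  obtain ⟨v, hv⟩ := hrec n le_rfl
  have hv' : ∀ t, m < t → ∀ ε, 0 < ε →
      ∃ x, x ∈ X ∧ f x ≤ t ∧ ∀ j : Fin n, |x j - v j| ≤ ε := by
    intro t ht ε hε
    obtain ⟨x, h1, h2, h3⟩ := hv t ht ε hε
    refine ⟨x, h1, h2, fun j => ?_⟩
    have e : Fin.castLE le_rfl j = j := rfl
    have := h3 j
    rwa [e] at this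
  -- the candidate point is in X
  have hvX : v ∈ X := by
    rw [← hcl.closure_eq]
    rw [mem_closure_iff]
    intro o ho hvo
    obtain ⟨ε, hε, hbox⟩ := DLSC.box_lemma ho hvo
    obtain ⟨x, h1, _, h3⟩ := hv' (m + 1) (by linarith) ε hε
    exact ⟨x, hbox x h3, h1⟩
  -- f v = m
  have hm1 : m ≤ f v := hm.1 ⟨v, hvX, rfl⟩
  have hm2 : f v ≤ m := by
    by_contra hc
    push_neg at hc
    set c := (m + f v) / 2 with hcdef
    have hc1 : m < c := by rw [hcdef]; linarith
    have hc2 : c < f v := by rw [hcdef]; linarith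
    have hev := hlsc v hvX c hc2
    obtain ⟨o, ho, hvo, hsub⟩ := mem_nhdsWithin.1 hev
    obtain ⟨ε, hε, hbox⟩ := DLSC.box_lemma ho hvo
    obtain ⟨x, h1, h2, h3⟩ := hv' ((m + c) / 2) (by linarith) ε hε
    have : c < f x := hsub ⟨hbox x h3, h1⟩
    have : f x ≤ (m + c) / 2 := h2
    linarith
  have : f v = m := le_antisymm hm2 hm1
  exact ⟨v, hvX, this ▸ hm⟩
end

section
/- Let X be a nonempty closed subset of ℝ^n and f : X → [0,∞) a lower semi-continuous function. Then there exists x₀ ∈ X such that S_f(x₀) = {x₀}, i.e., for every y ∈ X, if ‖x₀ − y‖ ≤ f(x₀) − f(y) then y = x₀. -/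
open Set

/-- Auxiliary lemma: the sets `S_f(x)` are "monotone": if `y ∈ S_f(x)` then `S_f(y) ⊆ S_f(x)`. -/
theorem caristi_aux_mono {E : Type*} [NormedAddCommGroup E] (X : Set E) (f : E → ℝ)
    {x y : E} (hy : y ∈ X ∧ ‖x - y‖ ≤ f x - f y) :
    {z ∈ X | ‖y - z‖ ≤ f y - f z} ⊆ {z ∈ X | ‖x - z‖ ≤ f x - f z} := by
  rintro z ⟨hzX, hz⟩
  refine ⟨hzX, ?_⟩
  have tri : ‖x - z‖ ≤ ‖x - y‖ + ‖y - z‖ := by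
    simpa [dist_eq_norm] using dist_triangle x y z
  linarith [hy.2]

/-- **Caristi-type property for nonempty closed subsets of ℝⁿ.**
If `X ⊆ ℝⁿ` is nonempty and closed and `f : X → [0,∞)` is lower semi-continuous, then
there is `x₀ ∈ X` with `S_f(x₀) = {x₀}`, where
`S_f(x) = {y ∈ X | ‖x − y‖ ≤ f x − f y}`. -/
theorem caristi_of_closed
    (n : ℕ) (X : Set (EuclideanSpace ℝ (Fin n))) (hXne : X.Nonempty) (hXcl : IsClosed X)
    (f : EuclideanSpace ℝ (Fin n) → ℝ)
    (hfpos : ∀ x ∈ X, 0 ≤ f x)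
    (hlsc : LowerSemicontinuousOn f X) :
    ∃ x₀ ∈ X, {y ∈ X | ‖x₀ - y‖ ≤ f x₀ - f y} = {x₀} := by
  classical
  set S : EuclideanSpace ℝ (Fin n) → Set (EuclideanSpace ℝ (Fin n)) :=
    fun x => {y ∈ X | ‖x - y‖ ≤ f x - f y} with hS
  have hself : ∀ x ∈ X, x ∈ S x := by
    intro x hx
    exact ⟨hx, by simp⟩
  have hbdd : ∀ x, BddBelow (f '' S x) := by
    intro x
    refine ⟨0, ?_⟩
    rintro a ⟨y, hy, rfl⟩
    exact hfpos y hy.1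
  have key : ∀ x ∈ X, ∀ ε : ℝ, 0 < ε → ∃ x' ∈ S x, f x' < sInf (f '' S x) + ε := by
    intro x hx ε hε
    have hne : (f '' S x).Nonempty := ⟨f x, x, hself x hx, rfl⟩
    have hlt : sInf (f '' S x) < sInf (f '' S x) + ε := by linarith
    obtain ⟨a, ⟨x', hx', rfl⟩, ha⟩ := exists_lt_of_csInf_lt hne hlt
    exact ⟨x', hx', ha⟩
  -- the step function
  set F : ℕ → EuclideanSpace ℝ (Fin n) → EuclideanSpace ℝ (Fin n) := fun k x =>
    if h : x ∈ X then (key x h ((1/2 : ℝ)^k) (by positivity)).choose else x with hF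
  set u : ℕ → EuclideanSpace ℝ (Fin n) :=
    fun m => Nat.rec hXne.choose (fun k ih => F k ih) m with hu
  have hu0 : u 0 = hXne.choose := rfl
  have husucc : ∀ k, u (k+1) = F k (u k) := fun k => rfl
  have hX : ∀ k, u k ∈ X := by
    intro k
    induction k with
    | zero => exact hXne.choose_spec
    | succ k ih =>
      rw [husucc, hF]
      simp only [dif_pos ih]
      exact (key (u k) ih ((1/2 : ℝ)^k) (by positivity)).choose_spec.1.1
  have hspec : ∀ k, u (k+1) ∈ S (u k) ∧ f (u (k+1)) < sInf (f '' S (u k)) + (1/2 : ℝ)^k := by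
    intro k
    have h := (key (u k) (hX k) ((1/2 : ℝ)^k) (by positivity)).choose_spec
    have : u (k+1) = (key (u k) (hX k) ((1/2 : ℝ)^k) (by positivity)).choose := by
      rw [husucc, hF]; simp only [dif_pos (hX k)]
    rw [this]
    exact h
  have hchain : ∀ m k, m ≤ k → u k ∈ S (u m) := by
    intro m k hmk
    induction k, hmk using Nat.le_induction with
    | base => exact hself (u m) (hX m)
    | succ k hmk ih =>
      exact caristi_aux_mono X f ih (hspec k).1
  -- key smallness estimate
  have hB : ∀ k, ∀ y ∈ S (u (k+1)), ‖u (k+1) - y‖ ≤ (1/2 : ℝ)^k := by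
    intro k y hy
    have hy' : y ∈ S (u k) := caristi_aux_mono X f (hspec k).1 hy
    have h1 : sInf (f '' S (u k)) ≤ f y := csInf_le (hbdd (u k)) ⟨y, hy', rfl⟩
    have h2 := (hspec k).2
    have h3 := hy.2
    linarith
  -- Cauchy sequence
  have hcauchy : CauchySeq (fun k => u (k+1)) := by
    apply cauchySeq_of_le_geometric (1/2 : ℝ) 1 (by norm_num)
    intro k
    rw [dist_eq_norm]
    have := hB k (u (k+2)) (hchain (k+1) (k+2) (by omega))
    linarith
  obtain ⟨z, hz⟩ := cauchySeq_tendsto_of_complete hcauchy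
  have hzu : Filter.Tendsto u Filter.atTop (nhds z) := by
    rwa [← Filter.tendsto_add_atTop_iff_nat 1]
  have hzX : z ∈ X := hXcl.mem_of_tendsto hzu (Filter.Eventually.of_forall hX)
  -- z belongs to all S (u k)
  have hFz : ∀ k, z ∈ S (u k) := by
    intro k
    refine ⟨hzX, ?_⟩
    rw [← sub_nonneg]
    have : ∀ ε : ℝ, 0 < ε → f z + ‖u k - z‖ ≤ f (u k) + ε := by
      intro ε hε
      have hlsz := hlsc z hzX (f z - ε/2) (by linarith)
      have htend : Filter.Tendsto u Filter.atTop (nhdsWithin z X) :=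
        tendsto_nhdsWithin_iff.mpr ⟨hzu, Filter.Eventually.of_forall hX⟩
      have h1 : ∀ᶠ j in Filter.atTop, f z - ε/2 < f (u j) := htend.eventually hlsz
      have h2 : ∀ᶠ j in Filter.atTop, dist (u j) z < ε/2 := by
        obtain ⟨N, hN⟩ := Metric.tendsto_atTop.mp hzu (ε/2) (by linarith)
        exact Filter.eventually_atTop.mpr ⟨N, hN⟩
      obtain ⟨j, ⟨⟨hj1, hj2⟩, hjk⟩⟩ :=
        ((h1.and h2).and (Filter.eventually_ge_atTop k)).exists
      have hj3 : ‖u k - u j‖ ≤ f (u k) - f (u j) := (hchain k j hjk).2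
      have tri : ‖u k - z‖ ≤ ‖u k - u j‖ + ‖u j - z‖ := by
        simpa [dist_eq_norm] using dist_triangle (u k) (u j) z
      rw [dist_eq_norm] at hj2
      linarith
    linarith [le_of_forall_pos_le_add this]
  refine ⟨z, hzX, ?_⟩
  ext y
  simp only [mem_singleton_iff]
  constructor
  · intro hy
    have hy' : ∀ k, y ∈ S (u k) := fun k => caristi_aux_mono X f (hFz k) hy
    have hle : ∀ k : ℕ, ‖z - y‖ ≤ 2 * (1/2 : ℝ)^k := by
      intro k
      have h1 := hB k z (hFz (k+1))
      have h2 := hB k y (hy' (k+1))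
      have tri : ‖z - y‖ ≤ ‖u (k+1) - z‖ + ‖u (k+1) - y‖ := by
        have := dist_triangle z (u (k+1)) y
        simpa [dist_eq_norm, norm_sub_rev] using this
      linarith
    have htend0 : Filter.Tendsto (fun k : ℕ => 2 * (1/2 : ℝ)^k) Filter.atTop (nhds 0) := by
      have := tendsto_pow_atTop_nhds_zero_of_lt_one (le_of_lt (by norm_num : (0:ℝ) < 1/2))
        (by norm_num : (1/2 : ℝ) < 1)
      simpa using this.const_mul 2
    have : ‖z - y‖ ≤ 0 := ge_of_tendsto htend0 (Filter.Eventually.of_forall hle)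
    have : ‖z - y‖ = 0 := le_antisymm this (norm_nonneg _)
    have := sub_eq_zero.mp (norm_eq_zero.mp this)
    exact this.symm
  · rintro rfl
    exact hself _ hzX
end

section
/- Let X be a subset of ℝ^n that is not closed. Then there exists a continuous function f : X → [0,∞) such that for every x ∈ X, S_f(x) ≠ {x}, i.e., there exists y ∈ X with y ≠ x and ‖x − y‖ ≤ f(x) − f(y). -/
open Set

/-- **Failure of the Caristi property on non-closed subsets of ℝⁿ.**
If `X ⊆ ℝⁿ` is not closed, then there is a continuous function `f : X → [0,∞)` such that
for every `x ∈ X` we have `S_f(x) ≠ {x}`: there is `y ∈ X` with `y ≠ x` and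
`‖x − y‖ ≤ f x - f y`. -/
theorem exists_continuous_no_caristi_point_of_not_closed
    (n : ℕ) (X : Set (EuclideanSpace ℝ (Fin n))) (hX : ¬ IsClosed X) :
    ∃ f : EuclideanSpace ℝ (Fin n) → ℝ,
      ContinuousOn f X ∧ (∀ x ∈ X, 0 ≤ f x) ∧
      ∀ x ∈ X, ∃ y ∈ X, y ≠ x ∧ ‖x - y‖ ≤ f x - f y := by
  -- pick p in closure X \ X
  have h : ¬ closure X ⊆ X := fun h => hX (closure_subset_iff_isClosed.mp h)
  obtain ⟨p, hpc, hpX⟩ := Set.not_subset.mp h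
  refine ⟨fun x => 2 * ‖x - p‖, ?_, ?_, ?_⟩
  · exact ((continuous_const.mul ((continuous_id.sub continuous_const).norm))).continuousOn
  · intro x _; positivity
  · intro x hx
    have hxp : x ≠ p := fun h => hpX (h ▸ hx)
    have hpos : 0 < ‖x - p‖ := by
      rw [norm_pos_iff, sub_ne_zero]; exact hxp
    obtain ⟨y, hyX, hy⟩ := Metric.mem_closure_iff.mp hpc (‖x - p‖ / 4) (by positivity)
    have hy' : ‖y - p‖ < ‖x - p‖ / 4 := by
      rw [← dist_eq_norm]; rw [dist_comm] at hy; exact hy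
    refine ⟨y, hyX, ?_, ?_⟩
    · intro h; subst h
      linarith
    · have h1 : ‖x - y‖ ≤ ‖x - p‖ + ‖y - p‖ := by
        calc ‖x - y‖ = ‖(x - p) - (y - p)‖ := by rw [sub_sub_sub_cancel_right]
          _ ≤ ‖x - p‖ + ‖y - p‖ := norm_sub_le _ _
      simp only []
      linarith
end

section
/- Let X be a nonempty subset of ℝ^n. Then X is closed if and only if for every lower semi-continuous function f : X → [0,∞) there exists x₀ ∈ X such that S_f(x₀) = {x₀}. -/
open Set Filter

/-- Sublevel sets of a lower semicontinuous function on a closed set are closed. -/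
lemma lsc_sublevel_isClosed {E : Type*} [MetricSpace E] {X : Set E} (hX : IsClosed X)
    {g : E → ℝ} (hg : LowerSemicontinuousOn g X) (t : ℝ) :
    IsClosed {y ∈ X | g y ≤ t} := by
  rw [isClosed_iff_clusterPt]
  intro z hz
  have hzc : z ∈ closure {y ∈ X | g y ≤ t} := mem_closure_iff_clusterPt.2 hz
  have hzX : z ∈ X := hX.closure_subset (closure_mono (sep_subset _ _) hzc)
  refine ⟨hzX, ?_⟩
  by_contra h
  push_neg at h
  have h1 : ∀ᶠ y in nhdsWithin z X, t < g y := hg z hzX t h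
  have hne : (nhdsWithin z {y ∈ X | g y ≤ t}).NeBot :=
    mem_closure_iff_nhdsWithin_neBot.1 hzc
  have h2 : ∀ᶠ y in nhdsWithin z {y ∈ X | g y ≤ t}, t < g y :=
    nhdsWithin_mono z (sep_subset _ _) h1
  have h3 : ∀ᶠ y in nhdsWithin z {y ∈ X | g y ≤ t}, y ∈ {y ∈ X | g y ≤ t} :=
    self_mem_nhdsWithin
  obtain ⟨y, hy1, hy2⟩ := (h2.and h3).exists
  exact absurd hy2.2 (not_le.2 hy1)

/-- A lower semicontinuous function attains its minimum on a nonempty compact set. -/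
lemma lsc_exists_min {E : Type*} [MetricSpace E] {K : Set E} (hK : IsCompact K)
    (hKne : K.Nonempty) {g : E → ℝ} (hg : LowerSemicontinuousOn g K) :
    ∃ x₀ ∈ K, ∀ y ∈ K, g x₀ ≤ g y := by
  have hKcl : IsClosed K := hK.isClosed
  have hι : Nonempty K := hKne.to_subtype
  set F : K → Set E := fun p => {y ∈ K | g y ≤ g p} with hF
  have hdir : Directed (fun x1 x2 => x1 ⊇ x2) F := by
    intro p q
    rcases le_total (g p) (g q) with h | h
    · exact ⟨p, subset_rfl, fun y hy => ⟨hy.1, hy.2.trans h⟩⟩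
    · exact ⟨q, fun y hy => ⟨hy.1, hy.2.trans h⟩, subset_rfl⟩
  have hne : ∀ p : K, (F p).Nonempty := fun p => ⟨p, p.2, le_rfl⟩
  have hcl : ∀ p : K, IsClosed (F p) := fun p => lsc_sublevel_isClosed hKcl hg _
  have hcpt : ∀ p : K, IsCompact (F p) :=
    fun p => hK.of_isClosed_subset (hcl p) (sep_subset _ _)
  obtain ⟨z, hz⟩ :=
    IsCompact.nonempty_iInter_of_directed_nonempty_isCompact_isClosed F hdir hne hcpt hcl
  have hz' : ∀ p : K, z ∈ F p := Set.mem_iInter.1 hz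
  obtain ⟨p₀⟩ := hι
  exact ⟨z, (hz' p₀).1, fun y hy => (hz' ⟨y, hy⟩).2⟩

/-- **Caristi fixed point theorem in ℝⁿ.**
A nonempty set `X ⊆ ℝⁿ` is closed if and only if for every lower semi-continuous
`f : X → [0,∞)` there is `x₀ ∈ X` with `S_f(x₀) = {x₀}`, where
`S_f(x) = {y ∈ X | ‖x − y‖ ≤ f x − f y}`. -/
theorem closed_iff_caristi
    (n : ℕ) (X : Set (EuclideanSpace ℝ (Fin n))) (hXne : X.Nonempty) :
    IsClosed X ↔
      ∀ f : EuclideanSpace ℝ (Fin n) → ℝ,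
        (∀ x ∈ X, 0 ≤ f x) → LowerSemicontinuousOn f X →
        ∃ x₀ ∈ X, {y ∈ X | ‖x₀ - y‖ ≤ f x₀ - f y} = {x₀} := by
  constructor
  · intro hX f hf0 hflsc
    obtain ⟨x, hx⟩ := hXne
    set K : Set (EuclideanSpace ℝ (Fin n)) := {y ∈ X | ‖x - y‖ + f y ≤ f x} with hK
    have hglsc : LowerSemicontinuousOn (fun y => ‖x - y‖ + f y) X := by
      have hc : ContinuousOn (fun y : EuclideanSpace ℝ (Fin n) => ‖x - y‖) X :=
        ((continuous_const.sub continuous_id).norm).continuousOn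
      exact hc.lowerSemicontinuousOn.add hflsc
    have hKcl : IsClosed K := by
      have := lsc_sublevel_isClosed hX hglsc (f x)
      simpa [hK] using this
    have hKbd : Bornology.IsBounded K := by
      apply Metric.isBounded_iff_subset_closedBall x |>.2
      refine ⟨f x, fun y hy => ?_⟩
      have h0 : 0 ≤ f y := hf0 y hy.1
      have hle : ‖x - y‖ ≤ f x := by nlinarith [hy.2]
      simpa [Metric.mem_closedBall, dist_eq_norm, norm_sub_rev] using hle
    have hKcpt : IsCompact K := Metric.isCompact_of_isClosed_isBounded hKcl hKbd
    have hxK : x ∈ K := by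
      refine ⟨hx, ?_⟩
      simp
    have hKsub : K ⊆ X := sep_subset _ _
    obtain ⟨x₀, hx₀K, hx₀min⟩ := lsc_exists_min hKcpt ⟨x, hxK⟩ (hflsc.mono hKsub)
    refine ⟨x₀, hKsub hx₀K, ?_⟩
    ext y
    simp only [Set.mem_setOf_eq, Set.mem_singleton_iff]
    constructor
    · rintro ⟨hyX, hy⟩
      have hyK : y ∈ K := by
        refine ⟨hyX, ?_⟩
        have h1 : ‖x - y‖ ≤ ‖x - x₀‖ + ‖x₀ - y‖ := norm_sub_le_norm_sub_add_norm_sub x x₀ y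
        have h2 : ‖x - x₀‖ + f x₀ ≤ f x := hx₀K.2
        linarith
      have h3 : f x₀ ≤ f y := hx₀min y hyK
      have h4 : ‖x₀ - y‖ = 0 := le_antisymm (by linarith) (norm_nonneg _)
      have h5 : x₀ - y = 0 := norm_eq_zero.1 h4
      rw [sub_eq_zero] at h5
      exact h5.symm
    · rintro rfl
      exact ⟨hKsub hx₀K, by simp⟩
  · intro h
    rw [isClosed_iff_clusterPt]
    intro a ha
    have hac : a ∈ closure X := mem_closure_iff_clusterPt.2 ha
    by_contra haX
    set f : EuclideanSpace ℝ (Fin n) → ℝ := fun y => 2 * ‖y - a‖ with hf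
    have hf0 : ∀ x ∈ X, 0 ≤ f x := fun x _ => by positivity
    have hflsc : LowerSemicontinuousOn f X := by
      have hc : Continuous f := continuous_const.mul ((continuous_id.sub continuous_const).norm)
      exact hc.lowerSemicontinuous.lowerSemicontinuousOn X
    obtain ⟨x₀, hx₀X, hset⟩ := h f hf0 hflsc
    have hx₀a : 0 < ‖x₀ - a‖ := by
      rw [norm_pos_iff, sub_ne_zero]
      rintro rfl; exact haX hx₀X
    obtain ⟨y, hyX, hya⟩ := Metric.mem_closure_iff.1 hac (‖x₀ - a‖ / 3) (by linarith)
    rw [dist_comm, dist_eq_norm] at hya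
    have hyS : y ∈ {y ∈ X | ‖x₀ - y‖ ≤ f x₀ - f y} := by
      refine ⟨hyX, ?_⟩
      have h1 : ‖x₀ - y‖ ≤ ‖x₀ - a‖ + ‖y - a‖ := by
        have h2 := norm_sub_le_norm_sub_add_norm_sub x₀ a y
        have h3 : ‖a - y‖ = ‖y - a‖ := norm_sub_rev a y
        linarith
      simp only [hf]
      linarith
    rw [hset] at hyS
    rw [hyS] at hya
    linarith
end

section
/- Let n ≥ 1 and let A and V be real n×n matrices that are symmetric and idempotent (A = Aᵀ, A² = A, V = Vᵀ, V² = V) with trace(V) = 1. Let 0 < ε ≤ 1 and suppose ‖V − A‖ < ε, where ‖·‖ denotes the Euclidean (Frobenius) norm of a matrix. Then the operator norm of AV satisfies ‖AV‖_op > sqrt(1 − ε²), where ‖M‖_op = sup{‖Mv‖ : v ∈ ℝ^n, ‖v‖ = 1}. -/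
open Set Matrix

/-- The Euclidean norm of a vector in ℝⁿ. -/
noncomputable def euclNorm {n : ℕ} (v : Fin n → ℝ) : ℝ :=
  Real.sqrt (∑ i, (v i) ^ 2)

/-- The Frobenius norm of a real n×n matrix (the Euclidean norm of the matrix viewed as
an element of ℝ^(n²)). -/
noncomputable def frobNorm {n : ℕ} (M : Matrix (Fin n) (Fin n) ℝ) : ℝ :=
  Real.sqrt (∑ i, ∑ j, (M i j) ^ 2)

/-- The operator norm of a real n×n matrix with respect to the Euclidean norm on ℝⁿ:
`‖M‖_op = sup {‖Mv‖ : ‖v‖ = 1}`. -/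
noncomputable def opNorm {n : ℕ} (M : Matrix (Fin n) (Fin n) ℝ) : ℝ :=
  sSup {c : ℝ | ∃ v : Fin n → ℝ, euclNorm v = 1 ∧ c = euclNorm (M.mulVec v)}

/-- Row-wise Cauchy–Schwarz: for a unit vector `w`, `∑ᵢ (Mw)ᵢ² ≤ ∑ᵢⱼ Mᵢⱼ²`. -/
lemma rowCS {n : ℕ} (M : Matrix (Fin n) (Fin n) ℝ) (w : Fin n → ℝ)
    (hw : ∑ j, (w j) ^ 2 = 1) :
    ∑ i, (M.mulVec w i) ^ 2 ≤ ∑ i, ∑ j, (M i j) ^ 2 := by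
  apply Finset.sum_le_sum
  intro i _
  have := Finset.sum_mul_sq_le_sq_mul_sq Finset.univ (fun j => M i j) w
  simpa [Matrix.mulVec, dotProduct, hw] using this

/-- **Lower bound on the operator norm of a product of nearby orthogonal projections.**
If `A` and `V` are symmetric idempotent real n×n matrices (orthogonal projections) with
`trace V = 1`, `0 < ε ≤ 1`, and the Frobenius norm of `V − A` is less than `ε`, then
`‖AV‖_op > √(1 − ε²)`. -/
theorem opNorm_proj_mul_proj_gt
    (n : ℕ) (hn : 1 ≤ n) (A V : Matrix (Fin n) (Fin n) ℝ)
    (hAsymm : Aᵀ = A) (hAidem : A * A = A)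
    (hVsymm : Vᵀ = V) (hVidem : V * V = V)
    (hVtr : V.trace = 1)
    (ε : ℝ) (hε0 : 0 < ε) (hε1 : ε ≤ 1)
    (hAV : frobNorm (V - A) < ε) :
    opNorm (A * V) > Real.sqrt (1 - ε ^ 2) := by
  classical
  -- V ≠ 0, so there is w with V.mulVec w ≠ 0
  have hVne : V ≠ 0 := by
    intro h
    rw [h] at hVtr
    simp [Matrix.trace] at hVtr
  have hw : ∃ w : Fin n → ℝ, V.mulVec w ≠ 0 := by
    by_contra h
    push_neg at h
    apply hVne
    ext i j
    have := congrFun (h (Pi.single j 1)) i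
    simpa [Matrix.mulVec_single] using this
  obtain ⟨w, hw⟩ := hw
  set u : Fin n → ℝ := V.mulVec w with hu
  have hVu : V.mulVec u = u := by
    rw [hu, Matrix.mulVec_mulVec, hVidem]
  have hus : 0 < ∑ i, (u i) ^ 2 := by
    have : ∃ i, u i ≠ 0 := by
      by_contra h
      push_neg at h
      exact hw (funext h)
    obtain ⟨i, hi⟩ := this
    exact Finset.sum_pos' (fun j _ => sq_nonneg _)
      ⟨i, Finset.mem_univ i, by positivity⟩
  set r : ℝ := Real.sqrt (∑ i, (u i) ^ 2) with hr
  have hrpos : 0 < r := Real.sqrt_pos.mpr hus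
  set v : Fin n → ℝ := r⁻¹ • u with hv
  have hVv : V.mulVec v = v := by
    rw [hv, Matrix.mulVec_smul, hVu]
  have hv1 : ∑ i, (v i) ^ 2 = 1 := by
    have : ∑ i, (v i) ^ 2 = r⁻¹ ^ 2 * ∑ i, (u i) ^ 2 := by
      rw [Finset.mul_sum]
      refine Finset.sum_congr rfl fun i _ => ?_
      simp [hv, mul_pow]
    rw [this, hr, inv_pow, Real.sq_sqrt hus.le]
    field_simp
  -- key quantities
  set a : ℝ := ∑ i, (A.mulVec v i) ^ 2 with ha
  have hsum_nonneg : ∀ (x : Fin n → ℝ), (0:ℝ) ≤ ∑ i, (x i)^2 :=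
    fun x => Finset.sum_nonneg fun i _ => sq_nonneg _
  -- frobNorm bound squared
  have hfrob_sq : ∑ i, ∑ j, ((V - A) i j) ^ 2 < ε ^ 2 := by
    have h1 : frobNorm (V - A) ^ 2 < ε ^ 2 := by
      have h0 : 0 ≤ frobNorm (V - A) := Real.sqrt_nonneg _
      nlinarith
    have h2 : (0:ℝ) ≤ ∑ i, ∑ j, ((V - A) i j) ^ 2 := by positivity
    rwa [frobNorm, Real.sq_sqrt h2] at h1
  have hCS : ∑ i, ((V - A).mulVec v i) ^ 2 < ε ^ 2 :=
    lt_of_le_of_lt (rowCS (V - A) v hv1) hfrob_sq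
  -- (V - A) v = v - A v
  have hsub : (V - A).mulVec v = v - A.mulVec v := by
    rw [Matrix.sub_mulVec, hVv]
  -- the cross term: v ⬝ Av = a
  have hcross : ∑ i, v i * A.mulVec v i = a := by
    have h1 : ∑ i, v i * A.mulVec v i = v ⬝ᵥ A.mulVec v := rfl
    have h2 : a = A.mulVec v ⬝ᵥ A.mulVec v := by
      rw [ha]
      simp [dotProduct, sq]
    have h3 : A.mulVec v ⬝ᵥ A.mulVec v = v ⬝ᵥ A.mulVec v := by
      rw [Matrix.dotProduct_mulVec, ← hAsymm, Matrix.vecMul_transpose, hAsymm,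
        Matrix.mulVec_mulVec, hAidem, dotProduct_comm]
    rw [h1, h2, h3]
  -- ∑ (v - Av)² = 1 - a
  have hexp : ∑ i, ((v - A.mulVec v) i) ^ 2 = 1 - a := by
    have : ∀ i, ((v - A.mulVec v) i) ^ 2
        = (v i)^2 - 2 * (v i * A.mulVec v i) + (A.mulVec v i)^2 := by
      intro i; simp [Pi.sub_apply]; ring
    rw [Finset.sum_congr rfl fun i _ => this i]
    rw [Finset.sum_add_distrib, Finset.sum_sub_distrib, ← Finset.mul_sum,
      hv1, hcross, ha]
    ring
  have hagt : 1 - ε ^ 2 < a := by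
    rw [hsub, hexp] at hCS
    linarith
  -- AV v = A v
  have hAVv : (A * V).mulVec v = A.mulVec v := by
    rw [← Matrix.mulVec_mulVec, hVv]
  -- membership in the sup set
  have hmem : euclNorm ((A * V).mulVec v) ∈
      {c : ℝ | ∃ x : Fin n → ℝ, euclNorm x = 1 ∧ c = euclNorm ((A * V).mulVec x)} := by
    exact ⟨v, by rw [euclNorm, hv1, Real.sqrt_one], rfl⟩
  -- bounded above by frobNorm (A*V)
  have hbdd : BddAbove {c : ℝ | ∃ x : Fin n → ℝ, euclNorm x = 1 ∧ c = euclNorm ((A * V).mulVec x)} := by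
    refine ⟨frobNorm (A * V), fun c hc => ?_⟩
    obtain ⟨x, hx1, hcx⟩ := hc
    have hx1' : ∑ j, (x j) ^ 2 = 1 := by
      have := congrArg (fun t => t ^ 2) hx1
      simpa [euclNorm, Real.sq_sqrt (hsum_nonneg x)] using this
    rw [hcx, euclNorm, frobNorm]
    exact Real.sqrt_le_sqrt (rowCS (A * V) x hx1')
  -- conclude
  have hval : Real.sqrt (1 - ε ^ 2) < euclNorm ((A * V).mulVec v) := by
    rw [hAVv, euclNorm, ← ha]
    exact Real.sqrt_lt_sqrt (by nlinarith) hagt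
  exact lt_of_lt_of_le hval (le_csSup hbdd hmem)
end

section
/- Mean value inequality in a definably complete expansion of an ordered field: let F be a definably complete expansion of an ordered field, a < b in F, C ∈ F, and let f : [a,b] → F be a definable continuous function that is differentiable on (a,b) with |f'(t)| ≤ C for all t ∈ (a,b). Then |f(b) − f(a)| ≤ C·(b − a). -/
open FirstOrder Set Topology Filter

namespace DefinableMVI

variable {L : FirstOrder.Language} {F : Type*} [L.Structure F]

lemma defn_reindex {k n : ℕ} (σ : Fin k → Fin n) {s : Set (Fin k → F)}
    (h : (Set.univ : Set F).Definable L s) :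
    (Set.univ : Set F).Definable L {x : Fin n → F | x ∘ σ ∈ s} :=
  h.preimage_comp σ

lemma defn_exists {n : ℕ} {s : Set (Fin (n+1) → F)}
    (h : (Set.univ : Set F).Definable L s) :
    (Set.univ : Set F).Definable L {x : Fin n → F | ∃ y : F, Fin.snoc x y ∈ s} := by
  have h2 := h.image_comp (Fin.castSucc : Fin n → Fin (n+1))
  convert h2 using 1
  ext x
  simp only [Set.mem_image, Set.mem_setOf_eq]
  constructor
  · rintro ⟨y, hy⟩
    exact ⟨Fin.snoc x y, hy, funext fun i => by simp⟩
  · rintro ⟨g, hg, rfl⟩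
    refine ⟨g (Fin.last n), ?_⟩
    convert hg
    ext i
    refine Fin.lastCases ?_ (fun j => ?_) i <;> simp

lemma defn_eq2 : (Set.univ : Set F).Definable L {x : Fin 2 → F | x 0 = x 1} :=
  ⟨Language.Term.equal (Language.Term.var 0) (Language.Term.var 1), by
    ext x; simp [Language.Formula.realize_equal]⟩

lemma defn_const (c : F) : (Set.univ : Set F).Definable L {x : Fin 1 → F | x 0 = c} :=
  ⟨Language.Term.equal (Language.Term.var 0)
    ((L.con (⟨c, Set.mem_univ c⟩ : (Set.univ : Set F))).term), by
    ext x; simp [Language.Formula.realize_equal]⟩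

lemma snoc4_eq (p : Fin 2 → F) (u v : F) :
    (Fin.snoc (Fin.snoc p u) v : Fin 4 → F) = ![p 0, p 1, u, v] := by
  funext i
  fin_cases i <;> simp [Fin.snoc] <;> rfl

lemma snoc2_eq (x : Fin 1 → F) (y : F) :
    (Fin.snoc x y : Fin 2 → F) = ![x 0, y] := by
  funext i
  fin_cases i <;> simp [Fin.snoc] <;> rfl

/-- graphs of definable functions -/
def DG (L : FirstOrder.Language) (F : Type*) [L.Structure F] (g : F → F) : Prop :=
  (Set.univ : Set F).Definable L {p : Fin 2 → F | g (p 0) = p 1}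

lemma dg_congr {g h : F → F} (e : ∀ x, g x = h x) (hg : DG L F g) : DG L F h := by
  have : {p : Fin 2 → F | g (p 0) = p 1} = {p : Fin 2 → F | h (p 0) = p 1} := by
    ext p; simp [e]
  unfold DG at hg ⊢; rwa [this] at hg

lemma dg_id : DG L F (fun x => x) := defn_eq2

lemma dg_const (c : F) : DG L F (fun _ => c) := by
  have h := defn_reindex (![1] : Fin 1 → Fin 2) (defn_const (L := L) c)
  have e : {x : Fin 2 → F | x ∘ ![1] ∈ {x : Fin 1 → F | x 0 = c}}
      = {p : Fin 2 → F | (fun _ : F => c) (p 0) = p 1} := by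
    ext p; simp [eq_comm]
  unfold DG; rwa [e] at h

lemma dg_op (op : F → F → F)
    (hop : (Set.univ : Set F).Definable L {x : Fin 3 → F | op (x 0) (x 1) = x 2})
    {g h : F → F} (hg : DG L F g) (hh : DG L F h) : DG L F (fun x => op (g x) (h x)) := by
  have T1 := defn_reindex (![0,2] : Fin 2 → Fin 4) hg
  have T2 := defn_reindex (![0,3] : Fin 2 → Fin 4) hh
  have T3 := defn_reindex (![2,3,1] : Fin 3 → Fin 4) hop
  have hT := (T1.inter T2).inter T3
  have hE := defn_exists (defn_exists hT)
  unfold DG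
  convert hE using 1
  ext p
  simp only [Set.mem_setOf_eq, Set.mem_inter_iff, snoc4_eq]
  constructor
  · intro hp
    refine ⟨g (p 0), h (p 0), ?_⟩
    simp only [Set.mem_setOf_eq, Function.comp_apply, Matrix.cons_val_zero, Matrix.cons_val_one,
      Matrix.head_cons, Matrix.cons_val_two, Matrix.tail_cons, Matrix.cons_val_three]
    exact ⟨⟨trivial, trivial⟩, hp⟩
  · rintro ⟨u, v, hm⟩
    simp only [Set.mem_setOf_eq, Function.comp_apply, Matrix.cons_val_zero, Matrix.cons_val_one,
      Matrix.head_cons, Matrix.cons_val_two, Matrix.tail_cons, Matrix.cons_val_three] at hm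
    obtain ⟨⟨h1, h2⟩, h3⟩ := hm
    rw [h1, h2]
    exact h3


variable [Field F] [LinearOrder F] [IsStrictOrderedRing F]

lemma defn_S
    (hadd : (Set.univ : Set F).Definable L {x : Fin 3 → F | x 0 + x 1 = x 2})
    (hmul : (Set.univ : Set F).Definable L {x : Fin 3 → F | x 0 * x 1 = x 2})
    (hlt : (Set.univ : Set F).Definable L {x : Fin 2 → F | x 0 < x 1})
    (a b c d : F) (f : F → F)
    (hfdef : (Set.univ : Set F).Definable L
      {p : Fin 2 → F | p 0 ∈ Set.Icc a b ∧ f (p 0) = p 1}) :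
    (Set.univ : Set F).Definable₁ L
      {t : F | t ∈ Set.Icc a b ∧ |f t - f a| ≤ c * (t - a) + d} := by
  -- the two affine comparison functions
  set g1 : F → F := fun x => c * x + ((d - c * a) + f a) with hg1def
  set g2 : F → F := fun x => (-c) * x + (f a - (d - c * a)) with hg2def
  have hg1 : DG L F g1 := by
    refine dg_congr (fun x => ?_)
      (dg_op (· + ·) hadd (dg_op (· * ·) hmul (dg_const c) dg_id)
        (dg_const ((d - c * a) + f a)))
    rfl
  have hg2 : DG L F g2 := by
    refine dg_congr (fun x => ?_)
      (dg_op (· + ·) hadd (dg_op (· * ·) hmul (dg_const (-c)) dg_id)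
        (dg_const (f a - (d - c * a))))
    rfl
  -- ≤ is definable
  have hle : (Set.univ : Set F).Definable L {x : Fin 2 → F | x 0 ≤ x 1} := by
    have h := (defn_reindex (![1,0] : Fin 2 → Fin 2) hlt).compl
    have e : {x : Fin 2 → F | x ∘ ![1,0] ∈ {x : Fin 2 → F | x 0 < x 1}}ᶜ
        = {x : Fin 2 → F | x 0 ≤ x 1} := by
      ext x
      simp [not_lt]
    rwa [e] at h
  -- the 4-dimensional definable set: coords (t, y, u, v)
  have T0 := defn_reindex (![0,1] : Fin 2 → Fin 4) hfdef
  have T1 := defn_reindex (![0,2] : Fin 2 → Fin 4) hg1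
  have T2 := defn_reindex (![0,3] : Fin 2 → Fin 4) hg2
  have T3 := defn_reindex (![1,2] : Fin 2 → Fin 4) hle
  have T4 := defn_reindex (![3,1] : Fin 2 → Fin 4) hle
  have hT := (((T0.inter T1).inter T2).inter T3).inter T4
  have hE := defn_exists (defn_exists (defn_exists hT))
  unfold Set.Definable₁
  convert hE using 1
  ext x
  simp only [Set.mem_setOf_eq, Set.mem_inter_iff, snoc4_eq, snoc2_eq, Function.comp_apply,
    Matrix.cons_val_zero, Matrix.cons_val_one, Matrix.head_cons, Matrix.cons_val_two,
    Matrix.tail_cons, Matrix.cons_val_three, Set.mem_Icc]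
  have hring : c * (x 0 - a) = c * (x 0) - c * a := by ring
  have hg2x : g2 (x 0) = -(c * (x 0)) + (f a - (d - c * a)) := by
    rw [hg2def]; ring
  constructor
  · rintro ⟨hicc, habs⟩
    rw [abs_sub_le_iff] at habs
    refine ⟨f (x 0), g1 (x 0), g2 (x 0), ⟨⟨⟨⟨hicc, rfl⟩, rfl⟩, rfl⟩, ?_⟩, ?_⟩ <;>
      · simp only [hg1def, hg2x]
        obtain ⟨h1, h2⟩ := habs
        linarith [hring]
  · rintro ⟨y, u, v, ⟨⟨⟨⟨hicc, hy⟩, hu⟩, hv⟩, h1⟩, h2⟩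
    subst hy; subst hu; subst hv
    refine ⟨hicc, ?_⟩
    rw [abs_sub_le_iff]
    constructor <;>
      · simp only [hg1def, hg2x] at h1 h2
        linarith [hring]

section Main
open Topology Filter

variable [TopologicalSpace F] [OrderTopology F]

theorem main_mvi
    (hadd : (Set.univ : Set F).Definable L {x : Fin 3 → F | x 0 + x 1 = x 2})
    (hmul : (Set.univ : Set F).Definable L {x : Fin 3 → F | x 0 * x 1 = x 2})
    (hlt : (Set.univ : Set F).Definable L {x : Fin 2 → F | x 0 < x 1})
    (hdc : ∀ s : Set F, (Set.univ : Set F).Definable₁ L s → s.Nonempty → BddAbove s →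
      ∃ a : F, IsLUB s a)
    (a b C : F) (hab : a < b)
    (f f' : F → F)
    (hfdef : (Set.univ : Set F).Definable L
      {p : Fin 2 → F | p 0 ∈ Set.Icc a b ∧ f (p 0) = p 1})
    (hfc : ContinuousOn f (Set.Icc a b))
    (hfd : ∀ t ∈ Set.Ioo a b,
      Tendsto (fun h : F => (f (t + h) - f t) / h) (𝓝[≠] (0 : F)) (𝓝 (f' t)))
    (hbound : ∀ t ∈ Set.Ioo a b, |f' t| ≤ C) :
    |f b - f a| ≤ C * (b - a) := by
  have key : ∀ ε : F, 0 < ε → |f b - f a| ≤ (C + ε) * (b - a) + ε := by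
    intro ε hε
    set S : Set F := {t : F | t ∈ Set.Icc a b ∧ |f t - f a| ≤ (C + ε) * (t - a) + ε}
      with hSdef
    have hSdefinable : (Set.univ : Set F).Definable₁ L S :=
      defn_S hadd hmul hlt a b (C + ε) ε f hfdef
    have haS : a ∈ S := by
      refine ⟨⟨le_refl a, hab.le⟩, ?_⟩
      simp only [sub_self, abs_zero, mul_zero]
      linarith
    have hSIcc : S ⊆ Set.Icc a b := fun x hx => hx.1
    have hbddS : BddAbove S := ⟨b, fun x hx => hx.1.2⟩
    obtain ⟨s, hlub⟩ := hdc S hSdefinable ⟨a, haS⟩ hbddS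
    have hsa : a ≤ s := hlub.1 haS
    have hsb : s ≤ b := hlub.2 fun x hx => hx.1.2
    -- s ∈ S by a closure/continuity argument
    have hsS : s ∈ S := by
      refine ⟨⟨hsa, hsb⟩, ?_⟩
      have hcw : ContinuousWithinAt
          (fun t : F => |f t - f a| - ((C + ε) * (t - a) + ε)) (Set.Icc a b) s := by
        have h1 : ContinuousWithinAt f (Set.Icc a b) s := hfc s ⟨hsa, hsb⟩
        have h2 : Continuous (fun t : F => (C + ε) * (t - a) + ε) := by
          fun_prop
        exact ((h1.sub continuousWithinAt_const).abs).sub h2.continuousWithinAt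
      have hnb : (𝓝[S] s).NeBot :=
        mem_closure_iff_nhdsWithin_neBot.mp (hlub.mem_closure ⟨a, haS⟩)
      have htend := (hcw.mono hSIcc).tendsto
      have hev : ∀ᶠ t in 𝓝[S] s,
          (fun t : F => |f t - f a| - ((C + ε) * (t - a) + ε)) t ≤ 0 := by
        filter_upwards [eventually_mem_nhdsWithin] with t ht
        have := ht.2
        simp only [sub_nonpos]
        exact this
      have := le_of_tendsto htend hev
      linarith [this]
    -- s = b
    have hsb' : s = b := by
      by_contra hne'
      have hslt : s < b := lt_of_le_of_ne hsb hne'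
      rcases eq_or_lt_of_le hsa with heq | hlt'
      · -- s = a : use continuity of f at a
        have hcw : ContinuousWithinAt f (Set.Icc a b) a := hfc a ⟨le_refl a, hab.le⟩
        have hV : {t : F | |f t - f a| < ε} ∈ 𝓝[Set.Icc a b] a := by
          have hmem : Set.Ioo (f a - ε) (f a + ε) ∈ 𝓝 (f a) :=
            Ioo_mem_nhds (by linarith) (by linarith)
          filter_upwards [hcw hmem] with t ht
          have h1 : f t ∈ Set.Ioo (f a - ε) (f a + ε) := ht
          rw [abs_sub_lt_iff]
          exact ⟨by linarith [h1.2], by linarith [h1.1]⟩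
        have hmono2 : 𝓝[Set.Ioc a b] a ≤ 𝓝[Set.Icc a b] a :=
          nhdsWithin_mono _ Set.Ioc_subset_Icc_self
        have hnb2 : (𝓝[Set.Ioc a b] a).NeBot := by
          rw [nhdsWithin_Ioc_eq_nhdsGT hab]
          infer_instance
        have hV' : ∀ᶠ t in 𝓝[Set.Ioc a b] a, |f t - f a| < ε := hmono2 hV
        obtain ⟨t, htV, htIoc⟩ := (hV'.and eventually_mem_nhdsWithin).exists
        have htS : t ∈ S := by
          refine ⟨⟨htIoc.1.le, htIoc.2⟩, ?_⟩
          have hpos : 0 ≤ (C + ε) * (t - a) := by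
            have hC : 0 ≤ C := le_trans (abs_nonneg _)
              (hbound ((a + b) / 2) ⟨by linarith, by linarith⟩)
            apply mul_nonneg (by linarith) (by linarith [htIoc.1])
          linarith [htV]
        have := hlub.1 htS
        rw [← heq] at this
        linarith [htIoc.1]
      · -- a < s < b : use the derivative at s
        have hds := hfd s ⟨hlt', hslt⟩
        have hmono3 : 𝓝[>] (0 : F) ≤ 𝓝[≠] (0 : F) :=
          nhdsWithin_mono _ fun x hx => ne_of_gt hx
        have hev1 : ∀ᶠ h in 𝓝[>] (0 : F),
            (f (s + h) - f s) / h ∈ Set.Ioo (f' s - ε) (f' s + ε) :=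
          hmono3 (hds (Ioo_mem_nhds (by linarith) (by linarith)))
        have hev2 : ∀ᶠ h in 𝓝[>] (0 : F), h ∈ Set.Iio (b - s) :=
          mem_nhdsWithin_of_mem_nhds (Iio_mem_nhds (by linarith))
        obtain ⟨h, hq, hhb, hh0⟩ := (hev1.and (hev2.and eventually_mem_nhdsWithin)).exists
        have hh0 : (0 : F) < h := hh0
        have hhb : h < b - s := hhb
        have habsq : |(f (s + h) - f s) / h| ≤ C + ε := by
          have hb' := abs_le.mp (hbound s ⟨hlt', hslt⟩)
          rw [abs_le]
          exact ⟨by linarith [hq.1, hb'.1], by linarith [hq.2, hb'.2]⟩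
        have hstep : |f (s + h) - f s| ≤ (C + ε) * h := by
          have : f (s + h) - f s = ((f (s + h) - f s) / h) * h :=
            (div_mul_cancel₀ _ (ne_of_gt hh0)).symm
          rw [this, abs_mul, abs_of_pos hh0]
          exact mul_le_mul_of_nonneg_right habsq hh0.le
        have htS : s + h ∈ S := by
          refine ⟨⟨by linarith, by linarith⟩, ?_⟩
          have tri := abs_sub_le (f (s + h)) (f s) (f a)
          have hs2 := hsS.2
          have hring2 : (C + ε) * h + (C + ε) * (s - a) = (C + ε) * ((s + h) - a) := by
            ring
          linarith
        have := hlub.1 htS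
        linarith
    rw [← hsb']
    exact hsS.2
  -- conclude from the ε-family of bounds
  by_contra hcon
  push_neg at hcon
  set d : F := |f b - f a| - C * (b - a) with hd
  have hd0 : 0 < d := by simp only [hd]; linarith
  have hba1 : (0 : F) < b - a + 1 := by linarith
  have hεpos : 0 < d / (2 * (b - a + 1)) := by positivity
  have hk := key _ hεpos
  have hexp : (C + d / (2 * (b - a + 1))) * (b - a) + d / (2 * (b - a + 1))
      = C * (b - a) + (d / (2 * (b - a + 1))) * (b - a + 1) := by ring
  have hval : (d / (2 * (b - a + 1))) * (b - a + 1) = d / 2 := by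
    field_simp
  rw [hexp, hval] at hk
  simp only [hd] at hk
  linarith

end Main

end DefinableMVI

/-- **Mean value inequality in a definably complete expansion of an ordered field.**
`F` is a definably complete expansion of an ordered field in a language `L`, `a < b` in
`F`, and `f : [a,b] → F` is a definable continuous function which is differentiable on
`(a,b)` with derivative `f'` (the limit of difference quotients in the order topology)
satisfying `|f' t| ≤ C` for all `t ∈ (a,b)`.  Then `|f b − f a| ≤ C·(b − a)`. -/
theorem definable_mean_value_inequality
    {L : FirstOrder.Language} {F : Type*} [Field F] [LinearOrder F] [IsStrictOrderedRing F] [L.Structure F]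
    [TopologicalSpace F] [OrderTopology F]
    -- F is an expansion of an ordered field: +, ·, < are definable with parameters
    (hadd : (Set.univ : Set F).Definable L {x : Fin 3 → F | x 0 + x 1 = x 2})
    (hmul : (Set.univ : Set F).Definable L {x : Fin 3 → F | x 0 * x 1 = x 2})
    (hlt : (Set.univ : Set F).Definable L {x : Fin 2 → F | x 0 < x 1})
    -- F is definably complete
    (hdc : ∀ s : Set F, (Set.univ : Set F).Definable₁ L s → s.Nonempty → BddAbove s →
      ∃ a : F, IsLUB s a)
    (a b C : F) (hab : a < b)
    (f f' : F → F)
    -- f (restricted to [a,b]) is definable: its graph over [a,b] is definable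
    (hfdef : (Set.univ : Set F).Definable L
      {p : Fin 2 → F | p 0 ∈ Set.Icc a b ∧ f (p 0) = p 1})
    -- f is continuous on [a,b]
    (hfc : ContinuousOn f (Set.Icc a b))
    -- f is differentiable on (a,b) with derivative f':
    -- f' t = lim_{h → 0} (f (t + h) − f t) / h in the order topology
    (hfd : ∀ t ∈ Set.Ioo a b,
      Tendsto (fun h : F => (f (t + h) - f t) / h) (𝓝[≠] (0 : F)) (𝓝 (f' t)))
    -- the derivative is bounded by C on (a,b)
    (hbound : ∀ t ∈ Set.Ioo a b, |f' t| ≤ C) :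
    |f b - f a| ≤ C * (b - a) :=
  DefinableMVI.main_mvi hadd hmul hlt hdc a b C hab f f' hfdef hfc hfd hbound
end
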